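/- arXiv:1911.10571 — 3 statements merged into one kernel-verified Lean document; each statement's English description precedes it below -/
import Mathlib

section
/- Assume the clustering hypotheses (a)–(d) and that Φ is β-aggregatively strongly monotone on B_R = {x ∈ (ℝ^T)^N : ‖x_n‖ ≤ R for all n} with β > 0, i.e. ⟨g − h, x − y⟩ ≥ Nβ‖x̄ − ȳ‖² for all x, y ∈ B_R, g ∈ Φ(x), h ∈ Φ(y). Let x = (x_i)_{i∈I} be an SVWE of the auxiliary population game with average x̄ = (1/N)∑_i |N_i|·x_i, and x* ∈ X(A) an SVWE of the original population game with average x̄* = (1/N)∑_n x*_n. Then ‖x̄ − x̄*‖ ≤ √(K/β), where K = 2R·(3·L₁·D/ρ + D_f). -/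
open scoped RealInnerProductSpace

noncomputable section

/-- `ℝ^T`. -/
abbrev Vec (T : ℕ) := EuclideanSpace ℝ (Fin T)

/-- The subdifferential of `φ : E → ℝ` at `x`. -/
def subdiff {E : Type*} [NormedAddCommGroup E] [InnerProductSpace ℝ E]
    (φ : E → ℝ) (x : E) : Set E :=
  {g | ∀ y, φ x + ⟪g, y - x⟫ ≤ φ y}

/-- Profiles `(ℝ^T)^N` with the norm `‖x‖² = ∑ₙ ‖xₙ‖²`. -/
abbrev Profile (N T : ℕ) := PiLp 2 (fun _ : Fin N => Vec T)

/-- Average action `x̄ = (1/N) ∑ₙ xₙ`. -/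
def avg {N T : ℕ} (x : Profile N T) : Vec T := (1 / (N : ℝ)) • ∑ n, x n

/-- `x̄₋ₙ = (1/N) ∑_{m ≠ n} xₘ`. -/
def avgOther {N T : ℕ} (x : Profile N T) (n : Fin N) : Vec T :=
  (1 / (N : ℝ)) • ∑ m ∈ Finset.univ.erase n, x m

/-- Feasible profiles satisfying the coupling constraint: `X(A)`. -/
def XA {N T : ℕ} (Xset : Fin N → Set (Vec T)) (A : Set (Vec T)) : Set (Profile N T) :=
  {x | (∀ n, x n ∈ Xset n) ∧ avg x ∈ A}

/-- `Φ(x) = ∏ₙ ∂₁fₙ(xₙ, x̄)`. -/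
def Phi {N T : ℕ} (f : Fin N → Vec T → Vec T → ℝ) (x : Profile N T) : Set (Profile N T) :=
  {g | ∀ n, g n ∈ subdiff (fun y => f n y (avg x)) (x n)}

/-- `Φ̂(x) = ∏ₙ ∂₁f̂ₙ(xₙ, x̄₋ₙ)` where `f̂ₙ(u,a) = fₙ(u, a + u/N)`. -/
def PhiHat {N T : ℕ} (f : Fin N → Vec T → Vec T → ℝ) (x : Profile N T) : Set (Profile N T) :=
  {g | ∀ n, g n ∈ subdiff (fun u => f n u (avgOther x n + (1 / (N : ℝ)) • u)) (x n)}

/-- Number of players in group `i`, i.e. `|N_i|` where `N_i = cl⁻¹(i)`. -/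
def clCard {N : ℕ} {I : Type*} [Fintype I] [DecidableEq I] (cl : Fin N → I) (i : I) : ℕ :=
  (Finset.univ.filter fun n => cl n = i).card

/-- Average of a population profile: `x̄ = (1/N) ∑ᵢ |N_i| • xᵢ`. -/
def avgI {N T : ℕ} {I : Type*} [Fintype I] [DecidableEq I] (cl : Fin N → I)
    (x : I → Vec T) : Vec T :=
  (1 / (N : ℝ)) • ∑ i, (clCard cl i : ℝ) • x i

/-- Feasible symmetric population profiles `X^I(A)`. -/
def XIA {N T : ℕ} {I : Type*} [Fintype I] [DecidableEq I] (cl : Fin N → I)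
    (Yset : I → Set (Vec T)) (A : Set (Vec T)) : Set (I → Vec T) :=
  {x | (∀ i, x i ∈ Yset i) ∧ avgI cl x ∈ A}

/-- The player profile associated to a population profile: `ψ(x)ₙ = x_{i(n)}`. -/
def psiMap {N T : ℕ} {I : Type*} (cl : Fin N → I) (x : I → Vec T) : Profile N T :=
  WithLp.toLp 2 (fun n => x (cl n))


section AuxLemmas

variable {E : Type*} [NormedAddCommGroup E] [InnerProductSpace ℝ E]

lemma isClosed_subdiff' (φ : E → ℝ) (x : E) : IsClosed (subdiff φ x) := by
  have : subdiff φ x = ⋂ y, {g : E | φ x + ⟪g, y - x⟫ ≤ φ y} := by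
    ext g; simp [subdiff, Set.mem_iInter]
  rw [this]
  exact isClosed_iInter fun y =>
    isClosed_le (by exact (continuous_const.add (Continuous.inner continuous_id continuous_const)))
      continuous_const

lemma norm_le_of_mem_subdiff' {φ : E → ℝ} {x g : E} {L : ℝ} (hL : 0 ≤ L)
    (hLip : ∀ u u', |φ u - φ u'| ≤ L * ‖u - u'‖) (hg : g ∈ subdiff φ x) : ‖g‖ ≤ L := by
  have h := hg (x + g)
  simp only [add_sub_cancel_left] at h
  have h2 : ⟪g, g⟫ ≤ φ (x + g) - φ x := by linarith
  have h3 : φ (x + g) - φ x ≤ L * ‖g‖ := by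
    have := hLip (x + g) x
    have h4 : ‖x + g - x‖ = ‖g‖ := by rw [add_sub_cancel_left]
    rw [h4] at this
    exact (le_abs_self _).trans this
  have h5 : ‖g‖ ^ 2 ≤ L * ‖g‖ := by
    rw [← real_inner_self_eq_norm_sq]; linarith
  rcases eq_or_lt_of_le (norm_nonneg g) with h6 | h6
  · rw [← h6]; exact hL
  · nlinarith

lemma subdiff_nonempty' [FiniteDimensional ℝ E] {φ : E → ℝ}
    (hφ : ConvexOn ℝ Set.univ φ) (x₀ : E) : (subdiff φ x₀).Nonempty := by
  have hcont : Continuous φ := hφ.locallyLipschitz.continuous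
  set S : Set (E × ℝ) := {p | φ p.1 < p.2} with hS
  have hSopen : IsOpen S := by
    have : S = (fun p : E × ℝ => p.2 - φ p.1) ⁻¹' Set.Ioi 0 := by
      ext p; simp [hS, sub_pos]
    rw [this]
    exact ((continuous_snd.sub (hcont.comp continuous_fst))).isOpen_preimage _ isOpen_Ioi
  have hSconv : Convex ℝ S := by
    rintro ⟨y, t⟩ hyt ⟨y', t'⟩ hyt' a b ha hb hab
    simp only [hS, Set.mem_setOf_eq] at hyt hyt' ⊢
    have := hφ.2 (Set.mem_univ y) (Set.mem_univ y') ha hb hab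
    simp only [Prod.smul_mk, Prod.mk_add_mk, smul_eq_mul] at *
    calc φ (a • y + b • y') ≤ a * φ y + b * φ y' := this
    _ < a * t + b * t' := by
        rcases ha.eq_or_lt with rfl | ha'
        · simp only [zero_mul, zero_add]
          have : b = 1 := by linarith
          nlinarith
        · rcases hb.eq_or_lt with rfl | hb'
          · have : a = 1 := by linarith
            nlinarith
          · have := mul_lt_mul_of_pos_left hyt ha'
            have := mul_lt_mul_of_pos_left hyt' hb'
            linarith
  have hx₀ : (x₀, φ x₀) ∉ S := by simp [hS]
  obtain ⟨ℓ, hℓ⟩ := geometric_hahn_banach_open_point hSconv hSopen hx₀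
  set L : E →L[ℝ] ℝ := ℓ.comp (ContinuousLinearMap.inl ℝ E ℝ) with hLdef
  set c : ℝ := ℓ (0, 1) with hc
  have hsplit : ∀ y t, ℓ (y, t) = L y + t * c := by
    intro y t
    have : (y, t) = (y, (0:ℝ)) + t • ((0:E), (1:ℝ)) := by simp [Prod.ext_iff]
    rw [this, map_add, map_smul]
    simp [hLdef, smul_eq_mul]
    exact Or.inl rfl
  have hcneg : c < 0 := by
    have h1 := hℓ (x₀, φ x₀ + 1) (by simp [hS])
    rw [hsplit, hsplit] at h1
    nlinarith
  have hkey : ∀ y, L y + φ y * c ≤ L x₀ + φ x₀ * c := by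
    intro y
    have h2 : ∀ ε > (0:ℝ), L y + φ y * c ≤ L x₀ + φ x₀ * c + ε := by
      intro ε hε
      have h1 := hℓ (y, φ y + ε / (-c)) (by
        simp only [hS, Set.mem_setOf_eq]
        have : 0 < ε / (-c) := div_pos hε (by linarith)
        linarith)
      rw [hsplit, hsplit] at h1
      have : (φ y + ε / (-c)) * c = φ y * c - ε := by
        have hcne : (-c) ≠ 0 := by intro h; rw [neg_eq_zero] at h; exact (ne_of_lt hcneg) h
        rw [add_mul, div_neg, neg_mul, div_mul_cancel₀ ε (ne_of_lt hcneg)]; ring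
      nlinarith [this]
    exact le_of_forall_pos_le_add h2
  refine ⟨-(1/c) • ((InnerProductSpace.toDual ℝ E).symm L), fun y => ?_⟩
  have hrep : ∀ w, ⟪((InnerProductSpace.toDual ℝ E).symm L), w⟫ = L w := by
    intro w; exact InnerProductSpace.toDual_symm_apply
  rw [inner_smul_left]
  simp only [RCLike.conj_to_real, hrep]
  have hL' : L (y - x₀) = L y - L x₀ := by rw [map_sub]
  have := hkey y
  rw [hL']
  have hcne : c ≠ 0 := ne_of_lt hcneg
  rw [div_eq_mul_inv] at *
  field_simp
  rw [div_le_iff_of_neg hcneg]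
  nlinarith

end AuxLemmas

section GeomLemmas
variable {T : ℕ}

/-- G1: the closed intrinsic ball around `z` of radius `ρ` is inside `C`. -/
lemma ball_mem_of_frontier_dist {C : Set (Vec T)} (hcl : IsClosed C)
    {z : Vec T} (hzC : z ∈ C) {ρ : ℝ}
    (hfr : ∀ w ∈ intrinsicFrontier ℝ C, ρ ≤ dist z w) :
    ∀ p ∈ affineSpan ℝ C, dist p z ≤ ρ → p ∈ C := by
  intro p hpS hpd
  by_contra hpC
  have hpz : p ≠ z := fun h => hpC (h ▸ hzC)
  have hnorm : 0 < ‖p - z‖ := by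
    rw [norm_pos_iff, sub_ne_zero]; exact hpz
  set γ : ℝ → Vec T := fun s => z + s • (p - z) with hγ
  have hγcont : Continuous γ := by fun_prop
  set K : Set ℝ := {s | s ∈ Set.Icc (0:ℝ) 1 ∧ γ s ∈ C} with hK
  have hKcl : IsClosed K := (isClosed_Icc.preimage continuous_id).inter (hcl.preimage hγcont)
  have hK0 : (0:ℝ) ∈ K := by
    refine ⟨⟨le_refl 0, by norm_num⟩, ?_⟩
    simpa [hγ] using hzC
  have hKbdd : BddAbove K := BddAbove.mono (fun s hs => hs.1) bddAbove_Icc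
  set s₀ : ℝ := sSup K with hs₀
  have hs₀K : s₀ ∈ K := hKcl.csSup_mem ⟨0, hK0⟩ hKbdd
  have hs₀le : s₀ ≤ 1 := hs₀K.1.2
  have hs₀0 : 0 ≤ s₀ := hs₀K.1.1
  have hs₀ne1 : s₀ ≠ 1 := by
    intro h
    apply hpC
    have := hs₀K.2
    rw [h] at this
    simpa [hγ] using this
  have hs₀lt1 : s₀ < 1 := lt_of_le_of_ne hs₀le hs₀ne1
  have hγS : ∀ s : ℝ, γ s ∈ affineSpan ℝ C := by
    intro s
    have hz' : z ∈ affineSpan ℝ C := subset_affineSpan ℝ C hzC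
    have := AffineSubspace.smul_vsub_vadd_mem (affineSpan ℝ C) s hpS hz' hz'
    simpa [hγ, vsub_eq_sub, vadd_eq_add, add_comm] using this
  have hfront : γ s₀ ∈ intrinsicFrontier ℝ C := by
    rw [mem_intrinsicFrontier]
    refine ⟨⟨γ s₀, hγS s₀⟩, ?_, rfl⟩
    rw [frontier, Set.mem_diff]
    constructor
    · exact subset_closure (by simpa using hs₀K.2)
    · intro hint
      rw [mem_interior_iff_mem_nhds, Metric.mem_nhds_iff] at hint
      obtain ⟨ε, hε, hball⟩ := hint
      set s₁ : ℝ := min 1 (s₀ + ε / (2 * ‖p - z‖)) with hs₁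
      have hs₁gt : s₀ < s₁ := by
        apply lt_min hs₀lt1
        have : 0 < ε / (2 * ‖p - z‖) := by positivity
        linarith
      have hs₁le1 : s₁ ≤ 1 := min_le_left _ _
      have hdist : dist (⟨γ s₁, hγS s₁⟩ : affineSpan ℝ C) ⟨γ s₀, hγS s₀⟩ < ε := by
        rw [Subtype.dist_eq]
        simp only [dist_eq_norm, hγ]
        have : z + s₁ • (p - z) - (z + s₀ • (p - z)) = (s₁ - s₀) • (p - z) := by module
        rw [this, norm_smul]
        have h1 : s₁ - s₀ ≤ ε / (2 * ‖p - z‖) := by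
          have := min_le_right 1 (s₀ + ε / (2 * ‖p - z‖))
          simp only [← hs₁] at this
          linarith
        have h2 : ‖(s₁ - s₀ : ℝ)‖ = s₁ - s₀ := by
          rw [Real.norm_eq_abs, abs_of_nonneg]; linarith
        rw [h2]
        calc (s₁ - s₀) * ‖p - z‖ ≤ (ε / (2 * ‖p - z‖)) * ‖p - z‖ := by
              apply mul_le_mul_of_nonneg_right h1 (norm_nonneg _)
          _ = ε / 2 := by field_simp
          _ < ε := by linarith
      have hmem := hball hdist
      have hγs₁C : γ s₁ ∈ C := hmem
      have : s₁ ∈ K := ⟨⟨by linarith, hs₁le1⟩, hγs₁C⟩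
      have := le_csSup hKbdd this
      linarith
  have := hfr _ hfront
  have hd : dist z (γ s₀) = s₀ * ‖p - z‖ := by
    simp only [hγ, dist_eq_norm]
    have : z - (z + s₀ • (p - z)) = (-s₀) • (p - z) := by module
    rw [this, norm_smul, Real.norm_eq_abs, abs_neg, abs_of_nonneg hs₀0]
  rw [hd] at this
  have hlt : s₀ * ‖p - z‖ < ‖p - z‖ := by nlinarith
  have hpzρ : ‖p - z‖ ≤ ρ := by rw [← dist_eq_norm]; exact hpd
  linarith

/-- G2: transfer an intrinsic ball from `X` to a Hausdorff-close convex set `Y`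
with the same affine span. -/
lemma ball_transfer {X Y : Set (Vec T)} (hXc : IsCompact X) (hXne : X.Nonempty)
    (hYc : IsCompact Y) (hYne : Y.Nonempty) (hYconv : Convex ℝ Y)
    {S : AffineSubspace ℝ (Vec T)} (hYS : Y ⊆ (S : Set (Vec T)))
    {z : Vec T} {ρ D r : ℝ} (hD : 0 ≤ D)
    (hball : ∀ p ∈ (S : Set (Vec T)), dist p z ≤ ρ → p ∈ X)
    (hH : Metric.hausdorffDist X Y ≤ D) (hrρ : r + 2*D < ρ) :
    ∀ p ∈ (S : Set (Vec T)), dist p z ≤ r → p ∈ Y := by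
  intro p hpS hpd
  by_contra hpY
  obtain ⟨ℓ, u, hsep⟩ := geometric_hahn_banach_closed_point hYconv hYc.isClosed hpY
  set v : Vec T := (InnerProductSpace.toDual ℝ (Vec T)).symm ℓ with hv
  have hrep : ∀ w : Vec T, ⟪v, w⟫ = ℓ w := fun w => InnerProductSpace.toDual_symm_apply
  set W := S.direction with hW
  set vW : Vec T := (W.starProjection v : Vec T) with hvW
  have hperp : ∀ w ∈ W, ⟪v - vW, w⟫ = 0 := by
    intro w hw
    exact Submodule.starProjection_inner_eq_zero v w hw
  have hkey : ∀ y ∈ Y, ⟪vW, p - y⟫ = ⟪v, p - y⟫ ∧ 0 < ⟪v, p - y⟫ := by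
    intro y hy
    have hmem : p - y ∈ W := by
      have := AffineSubspace.vsub_mem_direction hpS (hYS hy)
      simpa [vsub_eq_sub] using this
    constructor
    · have := hperp _ hmem
      rw [inner_sub_left] at this
      linarith
    · have h1 : ℓ y < u := (hsep.1 y hy)
      have h2 : u < ℓ p := hsep.2
      have : ⟪v, p - y⟫ = ℓ p - ℓ y := by rw [inner_sub_right, hrep, hrep]
      rw [this]; linarith
  have hvW0 : vW ≠ 0 := by
    intro h0
    obtain ⟨y₀, hy₀⟩ := hYne
    obtain ⟨heq, hpos⟩ := hkey y₀ hy₀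
    rw [h0] at heq
    simp only [inner_zero_left] at heq
    linarith
  have hvWpos : 0 < ‖vW‖ := norm_pos_iff.mpr hvW0
  set ε : ℝ := ρ - 2*D - r with hε
  have hεpos : 0 < ε := by simp only [hε]; linarith
  set c : ℝ := (D + ε) / ‖vW‖ with hc
  set q : Vec T := p + c • vW with hq
  have hqS : q ∈ (S : Set (Vec T)) := by
    have hcv : c • vW ∈ W := Submodule.smul_mem _ _ (W.starProjection_apply_mem v)
    have := AffineSubspace.vadd_mem_of_mem_direction hcv hpS
    simpa [vadd_eq_add, add_comm] using this
  have hqz : dist q z ≤ ρ := by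
    have h1 : dist q p = (D + ε) := by
      simp only [hq, dist_eq_norm, add_sub_cancel_left, norm_smul, Real.norm_eq_abs]
      rw [abs_of_nonneg (by positivity : (0:ℝ) ≤ c)]
      rw [hc, div_mul_cancel₀ _ hvWpos.ne']
    calc dist q z ≤ dist q p + dist p z := dist_triangle _ _ _
      _ ≤ (D + ε) + r := by rw [h1]; linarith
      _ ≤ ρ := by simp only [hε]; linarith
  have hqX : q ∈ X := hball q hqS hqz
  have hedist : EMetric.hausdorffEdist X Y ≠ ⊤ :=
    Metric.hausdorffEdist_ne_top_of_nonempty_of_bounded hXne hYne hXc.isBounded hYc.isBounded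
  have hinf : Metric.infDist q Y ≤ D :=
    le_trans (Metric.infDist_le_hausdorffDist_of_mem hqX hedist) hH
  obtain ⟨y₁, hy₁Y, hy₁d⟩ := hYc.exists_infDist_eq_dist hYne q
  have hdle : dist q y₁ ≤ D := by rw [← hy₁d]; exact hinf
  obtain ⟨heq, hpos⟩ := hkey y₁ hy₁Y
  have hinner : ⟪vW, q - y₁⟫ = ⟪vW, p - y₁⟫ + c * ‖vW‖^2 := by
    have : q - y₁ = (p - y₁) + c • vW := by simp only [hq]; module
    rw [this, inner_add_right, inner_smul_right, real_inner_self_eq_norm_sq]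
  have hbound : ⟪vW, q - y₁⟫ ≤ ‖vW‖ * ‖q - y₁‖ := real_inner_le_norm _ _
  have hcnorm : c * ‖vW‖^2 = (D + ε) * ‖vW‖ := by
    simp only [hc]; field_simp
  have hge : (D + ε) * ‖vW‖ ≤ ‖vW‖ * ‖q - y₁‖ := by
    rw [← hcnorm]
    calc c * ‖vW‖^2 ≤ ⟪vW, p - y₁⟫ + c * ‖vW‖^2 := by rw [heq]; linarith
      _ = ⟪vW, q - y₁⟫ := hinner.symm
      _ ≤ ‖vW‖ * ‖q - y₁‖ := hbound
  have : D + ε ≤ ‖q - y₁‖ := by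
    have := (mul_le_mul_iff_right₀ hvWpos).mp (by linarith [hge] : ‖vW‖ * (D + ε) ≤ ‖vW‖ * ‖q - y₁‖)
    exact this
  rw [dist_eq_norm] at hdle
  linarith

/-- SH: shrinking towards an intrinsic-interior point lands inside `C`. -/
lemma shrink_mem {C : Set (Vec T)} (hCcl : IsClosed C) (hCconv : Convex ℝ C)
    {S : AffineSubspace ℝ (Vec T)} (hCS : C ⊆ (S : Set (Vec T)))
    {c : Vec T} (hcS : c ∈ (S : Set (Vec T)))
    {r : ℝ} (hr : 0 < r) (hball : ∀ p ∈ (S : Set (Vec T)), dist p c ≤ r → p ∈ C)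
    {w : Vec T} (hwS : w ∈ (S : Set (Vec T))) {D : ℝ} (hD : 0 ≤ D)
    (hwD : Metric.infDist w C ≤ D) :
    (1 - D/(D+r)) • w + (D/(D+r)) • c ∈ C := by
  have hcC : c ∈ C := hball c hcS (by simp [hr.le])
  obtain ⟨w', hw'C, hw'd⟩ := hCcl.exists_infDist_eq_dist ⟨c, hcC⟩ w
  have hdw : dist w w' ≤ D := by rw [← hw'd]; exact hwD
  rcases eq_or_lt_of_le hD with hD0 | hDpos
  · have : dist w w' = 0 := le_antisymm (hD0 ▸ hdw) dist_nonneg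
    have hww' : w = w' := by rwa [dist_eq_zero] at this
    rw [← hD0]
    simpa using (hww' ▸ hw'C)
  · set t : ℝ := D/(D+r) with ht
    have hDr : 0 < D + r := by linarith
    have ht0 : 0 < t := div_pos hDpos hDr
    have ht1 : t < 1 := by rw [ht, div_lt_one hDr]; linarith
    set q : Vec T := c + (r/D) • (w - w') with hq
    have hqS : q ∈ (S : Set (Vec T)) := by
      have := AffineSubspace.smul_vsub_vadd_mem S (r/D) hwS (hCS hw'C) hcS
      simpa [hq, vsub_eq_sub, vadd_eq_add, add_comm] using this
    have hqc : dist q c ≤ r := by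
      simp only [hq, dist_eq_norm, add_sub_cancel_left, norm_smul, Real.norm_eq_abs]
      rw [abs_of_nonneg (by positivity : (0:ℝ) ≤ r/D)]
      rw [← dist_eq_norm] at *
      calc r/D * dist w w' ≤ r/D * D := by
            apply mul_le_mul_of_nonneg_left hdw (by positivity)
        _ = r := by field_simp
    have hqC : q ∈ C := hball q hqS hqc
    have key : (1 - t) • w + t • c = (1 - t) • w' + t • q := by
      have hmul : t * (r / D) = 1 - t := by
        rw [ht]; field_simp; ring
      simp only [hq, smul_add, smul_smul, hmul]
      module
    rw [key]
    exact hCconv hw'C hqC (by linarith) (by linarith) (by ring)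

lemma avg_mem_affine' {S : AffineSubspace ℝ (Vec T)} {α : Type*}
    (t : Finset α) (ht : t.Nonempty) (p : α → Vec T) (hp : ∀ n ∈ t, p n ∈ S) :
    ((t.card : ℝ)⁻¹ • ∑ n ∈ t, p n) ∈ S := by
  obtain ⟨n₀, hn₀⟩ := ht
  have hcard : (0:ℝ) < (t.card : ℝ) := by
    exact_mod_cast Finset.card_pos.mpr ⟨n₀, hn₀⟩
  have hdir : ((t.card : ℝ)⁻¹ • ∑ n ∈ t, p n) - p n₀ ∈ S.direction := by
    have heq : ((t.card : ℝ)⁻¹ • ∑ n ∈ t, p n) - p n₀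
        = (t.card : ℝ)⁻¹ • ∑ n ∈ t, (p n - p n₀) := by
      rw [Finset.sum_sub_distrib, Finset.sum_const, smul_sub]
      congr 1
      rw [← Nat.cast_smul_eq_nsmul ℝ, smul_smul, inv_mul_cancel₀ (ne_of_gt hcard), one_smul]
    rw [heq]
    refine Submodule.smul_mem _ _ (Submodule.sum_mem _ fun n hn => ?_)
    simpa [vsub_eq_sub] using AffineSubspace.vsub_mem_direction (hp n hn) (hp n₀ hn₀)
  have := AffineSubspace.vadd_mem_of_mem_direction hdir (hp n₀ hn₀)
  simpa [vadd_eq_add, sub_add_cancel] using this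

lemma smul_sum_norm_le {α : Type*} (t : Finset α) (p : α → Vec T) {R : ℝ} (hR : 0 ≤ R)
    (h : ∀ n ∈ t, ‖p n‖ ≤ R) : ‖(t.card : ℝ)⁻¹ • ∑ n ∈ t, p n‖ ≤ R := by
  rcases t.eq_empty_or_nonempty with rfl | ⟨n₀, hn₀⟩
  · simpa using hR
  have hcard : (0:ℝ) < (t.card : ℝ) := by
    exact_mod_cast Finset.card_pos.mpr ⟨n₀, hn₀⟩
  rw [norm_smul, Real.norm_eq_abs, abs_of_nonneg (by positivity)]
  have h1 : ‖∑ n ∈ t, p n‖ ≤ (t.card : ℝ) * R := by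
    calc ‖∑ n ∈ t, p n‖ ≤ ∑ n ∈ t, ‖p n‖ := norm_sum_le _ _
      _ ≤ ∑ _n ∈ t, R := Finset.sum_le_sum h
      _ = (t.card : ℝ) * R := by rw [Finset.sum_const, nsmul_eq_mul]
  calc (t.card : ℝ)⁻¹ * ‖∑ n ∈ t, p n‖ ≤ (t.card : ℝ)⁻¹ * ((t.card : ℝ) * R) := by
        apply mul_le_mul_of_nonneg_left h1 (by positivity)
    _ = R := by field_simp

end GeomLemmas

/-- The fiber of `cl` over `i` as a `Finset`. -/
def fiber {N : ℕ} {I : Type*} [DecidableEq I] (cl : Fin N → I) (i : I) : Finset (Fin N) :=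
  Finset.univ.filter fun n => cl n = i

lemma card_fiber {N : ℕ} {I : Type*} [Fintype I] [DecidableEq I] (cl : Fin N → I) (i : I) :
    (fiber cl i).card = clCard cl i := rfl

lemma sum_fiber_eq {N : ℕ} {I : Type*} [Fintype I] [DecidableEq I] (cl : Fin N → I)
    {M : Type*} [AddCommMonoid M] (φ : Fin N → M) :
    ∑ i, ∑ n ∈ fiber cl i, φ n = ∑ n, φ n :=
  Finset.sum_fiberwise_of_maps_to (fun n _ => Finset.mem_univ (cl n)) φ

set_option maxHeartbeats 4000000

/-- aggregate bound between the SVWE of the auxiliary population game and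
the SVWE of the original population game, under aggregative strong monotonicity. -/
theorem aux_svwe_close_to_svwe_aggregative (N T : ℕ) (hN : 0 < N) (hT : 0 < T)
    (R : ℝ) (hR : 0 < R)
    (f : Fin N → Vec T → Vec T → ℝ)
    (hfconv : ∀ n v, ConvexOn ℝ Set.univ (fun u => f n u v))
    (Xset : Fin N → Set (Vec T))
    (hXne : ∀ n, (Xset n).Nonempty) (hXconv : ∀ n, Convex ℝ (Xset n))
    (hXcomp : ∀ n, IsCompact (Xset n)) (hXbd : ∀ n, ∀ x ∈ Xset n, ‖x‖ ≤ R)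
    (A : Set (Vec T)) (hAne : A.Nonempty) (hAcl : IsClosed A) (hAconv : Convex ℝ A)
    (I : Type) [Fintype I] [DecidableEq I] (cl : Fin N → I) (hcl : Function.Surjective cl)
    (Yset : I → Set (Vec T))
    (hYne : ∀ i, (Yset i).Nonempty) (hYconv : ∀ i, Convex ℝ (Yset i))
    (hYcomp : ∀ i, IsCompact (Yset i)) (hYbd : ∀ i, ∀ y ∈ Yset i, ‖y‖ ≤ R)
    (F : I → Vec T → Vec T → ℝ)
    (hFconv : ∀ i v, ConvexOn ℝ Set.univ (fun u => F i u v))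
    (D Df : ℝ)
    (hspan : ∀ n, affineSpan ℝ (Xset n) = affineSpan ℝ (Yset (cl n)))
    (hhaus : ∀ n, Metric.hausdorffDist (Xset n) (Yset (cl n)) ≤ D)
    (hsubgrad : ∀ n, ∀ u ∈ Yset (cl n), ∀ v : Vec T, ‖v‖ ≤ R →
      Metric.hausdorffDist (subdiff (fun y => F (cl n) y v) u)
        (subdiff (fun y => f n y v) u) ≤ Df)
    (ρ : ℝ) (hρ : 0 < ρ) (z : Profile N T) (hz : z ∈ XA Xset A)
    (hzint : ∀ n, ∀ w ∈ intrinsicFrontier ℝ (Xset n), ρ ≤ dist (z n) w)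
    (hDρ : D < ρ / 2)
    (L₁ : ℝ) (hL₁ : 0 < L₁)
    (hfLip : ∀ n (v : Vec T), ‖v‖ ≤ R → ∀ u u', |f n u v - f n u' v| ≤ L₁ * ‖u - u'‖)
    (hFbound : ∀ i, ∀ u ∈ Yset i, ∀ v : Vec T, ‖v‖ ≤ R →
      ∀ h ∈ subdiff (fun y => F i y v) u, ‖h‖ ≤ L₁)
    (β : ℝ) (hβ : 0 < β)
    (hmono : ∀ x y : Profile N T, (∀ n, ‖x n‖ ≤ R) → (∀ n, ‖y n‖ ≤ R) →
      ∀ g ∈ Phi f x, ∀ h ∈ Phi f y, (N : ℝ) * β * ‖avg x - avg y‖ ^ 2 ≤ ⟪g - h, x - y⟫)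
    (xI : I → Vec T) (hxI : xI ∈ XIA cl Yset A)
    (hI : I → Vec T)
    (hhI : ∀ i, hI i ∈ subdiff (fun u => F i u (avgI cl xI)) (xI i))
    (hSVWEI : ∀ y ∈ XIA cl Yset A, 0 ≤ ∑ i, (clCard cl i : ℝ) * ⟪hI i, y i - xI i⟫)
    (xstar : Profile N T) (hxstar : xstar ∈ XA Xset A)
    (gstar : Profile N T) (hgstar : gstar ∈ Phi f xstar)
    (hSVWE : ∀ x ∈ XA Xset A, 0 ≤ ⟪gstar, x - xstar⟫)
    (K : ℝ) (hK : K = 2 * R * (3 * L₁ * D / ρ + Df)) :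
    ‖avgI cl xI - avg xstar‖ ≤ Real.sqrt (K / β) := by
  classical
  have hNpos : (0:ℝ) < (N:ℝ) := by exact_mod_cast hN
  set v : Vec T := avgI cl xI with hv
  have hD0 : 0 ≤ D := le_trans Metric.hausdorffDist_nonneg (hhaus ⟨0, hN⟩)
  -- fibers
  have hfibne : ∀ i, (fiber cl i).Nonempty := by
    intro i; obtain ⟨n, hn⟩ := hcl i
    exact ⟨n, by simp [fiber, hn]⟩
  have hkpos : ∀ i, (0:ℝ) < (clCard cl i : ℝ) := by
    intro i
    have := Finset.card_pos.mpr (hfibne i)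
    rw [card_fiber] at this
    exact_mod_cast this
  have hsumk : ∑ i, (clCard cl i : ℝ) = (N : ℝ) := by
    have h1 : (Finset.univ : Finset (Fin N)).card = ∑ i, clCard cl i :=
      Finset.card_eq_sum_card_fiberwise (fun n _ => Finset.mem_univ (cl n))
    have h2 : (Finset.univ : Finset (Fin N)).card = N := Finset.card_fin N
    rw [h2] at h1
    exact_mod_cast h1.symm
  -- the symmetrized profile
  set xhat : Profile N T := psiMap cl xI with hxhatdef
  have hxhatY : ∀ n, xhat n ∈ Yset (cl n) := fun n => by rw [hxhatdef]; exact hxI.1 (cl n)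
  have hxhatR : ∀ n, ‖xhat n‖ ≤ R := fun n => hYbd _ _ (hxhatY n)
  have hxstarR : ∀ n, ‖xstar n‖ ≤ R := fun n => hXbd n _ (hxstar.1 n)
  have hzR : ∀ n, ‖z n‖ ≤ R := fun n => hXbd n _ (hz.1 n)
  -- averages
  have hpsi_avg : ∀ w : I → Vec T, avg (psiMap cl w) = avgI cl w := by
    intro w
    unfold avg avgI psiMap
    congr 1
    rw [← sum_fiber_eq cl (fun n => w (cl n))]
    refine Finset.sum_congr rfl fun i _ => ?_
    rw [Finset.sum_congr rfl (fun n hn => by rw [(Finset.mem_filter.mp hn).2]),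
      Finset.sum_const, card_fiber, ← Nat.cast_smul_eq_nsmul ℝ]
  have havg_xhat : avg xhat = v := hpsi_avg xI
  have havgnorm : ∀ (x : Profile N T), (∀ n, ‖x n‖ ≤ R) → ‖avg x‖ ≤ R := by
    intro x hx
    have h1 : avg x = (((Finset.univ : Finset (Fin N)).card : ℝ))⁻¹ • ∑ n, x n := by
      unfold avg; congr 1; simp [one_div, Finset.card_fin]
    rw [h1]; exact smul_sum_norm_le _ _ hR.le (fun n _ => hx n)
  have hvR : ‖v‖ ≤ R := by rw [← havg_xhat]; exact havgnorm xhat hxhatR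
  have havgstarR : ‖avg xstar‖ ≤ R := havgnorm xstar hxstarR
  -- spans and balls
  set SI : I → AffineSubspace ℝ (Vec T) := fun i => affineSpan ℝ (Yset i) with hSI
  have hYS : ∀ i, Yset i ⊆ (SI i : Set (Vec T)) := fun i => subset_affineSpan ℝ _
  have hXS : ∀ n, Xset n ⊆ (SI (cl n) : Set (Vec T)) := by
    intro n x hx
    have h1 : x ∈ affineSpan ℝ (Xset n) := subset_affineSpan ℝ _ hx
    rw [hspan n] at h1
    exact h1
  have hballX : ∀ n, ∀ p ∈ (SI (cl n) : Set (Vec T)), dist p (z n) ≤ ρ → p ∈ Xset n := by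
    intro n p hp hpd
    refine ball_mem_of_frontier_dist (hXcomp n).isClosed (hz.1 n) (hzint n) p ?_ hpd
    rw [hspan n]
    exact hp
  set r₂ : ℝ := 3*(ρ/2 - D)/2 with hr₂def
  have hr₂pos : 0 < r₂ := by rw [hr₂def]; linarith
  have hr₂lt : r₂ + 2*D < ρ := by rw [hr₂def]; linarith
  have hballY : ∀ n, ∀ p ∈ (SI (cl n) : Set (Vec T)), dist p (z n) ≤ r₂ → p ∈ Yset (cl n) :=
    fun n => ball_transfer (hXcomp n) (hXne n) (hYcomp _) (hYne _) (hYconv _) (hYS _) hD0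
      (hballX n) (hhaus n) hr₂lt
  -- group averages of z and xstar
  set zt : I → Vec T := fun i => ((clCard cl i : ℝ))⁻¹ • ∑ n ∈ fiber cl i, z n with hztdef
  set sb : I → Vec T := fun i => ((clCard cl i : ℝ))⁻¹ • ∑ n ∈ fiber cl i, xstar n with hsbdef
  have hmemfib : ∀ {n : Fin N} {i : I}, n ∈ fiber cl i → cl n = i :=
    fun h => (Finset.mem_filter.mp h).2
  have hztS : ∀ i, zt i ∈ SI i := by
    intro i
    simp only [hztdef]
    rw [← card_fiber]
    exact avg_mem_affine' _ (hfibne i) z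
      (fun n hn => by rw [← hmemfib hn]; exact hXS n (hz.1 n))
  have hsbS : ∀ i, sb i ∈ SI i := by
    intro i
    simp only [hsbdef]
    rw [← card_fiber]
    exact avg_mem_affine' _ (hfibne i) xstar
      (fun n hn => by rw [← hmemfib hn]; exact hXS n (hxstar.1 n))
  have hztR : ∀ i, ‖zt i‖ ≤ R := by
    intro i
    simp only [hztdef]
    rw [← card_fiber]
    exact smul_sum_norm_le _ _ hR.le (fun n _ => hzR n)
  have hsbR : ∀ i, ‖sb i‖ ≤ R := by
    intro i
    simp only [hsbdef]
    rw [← card_fiber]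
    exact smul_sum_norm_le _ _ hR.le (fun n _ => hxstarR n)
  -- transferred intrinsic ball around the group average
  have hballYI : ∀ i, ∀ p ∈ (SI i : Set (Vec T)), dist p (zt i) ≤ r₂ → p ∈ Yset i := by
    intro i p hp hpd
    have hrepr : p = ∑ n ∈ fiber cl i, ((clCard cl i:ℝ))⁻¹ • (z n + (p - zt i)) := by
      rw [← Finset.smul_sum, Finset.sum_add_distrib, Finset.sum_const, smul_add,
        ← Nat.cast_smul_eq_nsmul ℝ, smul_smul, card_fiber,
        inv_mul_cancel₀ (ne_of_gt (hkpos i)), one_smul, hztdef]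
      abel
    rw [hrepr]
    refine Convex.sum_mem (hYconv i) (fun n _ => by positivity) ?_ (fun n hn => ?_)
    · rw [Finset.sum_const, card_fiber, nsmul_eq_mul,
        mul_inv_cancel₀ (ne_of_gt (hkpos i))]
    · have hcln : cl n = i := hmemfib hn
      have hdirmem : p - zt i ∈ (SI i).direction := by
        simpa [vsub_eq_sub] using AffineSubspace.vsub_mem_direction hp (hztS i)
      have hqS : z n + (p - zt i) ∈ (SI i : Set (Vec T)) := by
        have := AffineSubspace.vadd_mem_of_mem_direction hdirmem
          (by rw [← hcln]; exact hXS n (hz.1 n) : z n ∈ SI i)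
        simpa [vadd_eq_add, add_comm] using this
      have hqd : dist (z n + (p - zt i)) (z n) ≤ r₂ := by
        rw [dist_eq_norm, add_sub_cancel_left, ← dist_eq_norm]
        exact hpd
      have := hballY n (z n + (p - zt i)) (by rw [hcln]; exact hqS) hqd
      rw [hcln] at this
      exact this
  -- shrink xhat into X(A)
  set t₁ : ℝ := D/(D+ρ) with ht₁def
  have ht₁0 : 0 ≤ t₁ := by positivity
  have ht₁1 : t₁ ≤ 1 := by
    rw [ht₁def, div_le_one (by linarith)]; linarith
  have ht₁le : t₁ ≤ D/ρ := by
    rw [ht₁def, div_le_div_iff₀ (by linarith) hρ]; nlinarith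
  set x' : Profile N T := WithLp.toLp 2 (fun n => (1 - t₁) • xhat n + t₁ • z n) with hx'def
  have hx'X : ∀ n, x' n ∈ Xset n := by
    intro n
    have hinfd : Metric.infDist (xhat n) (Xset n) ≤ D := by
      have hfin := Metric.hausdorffEdist_ne_top_of_nonempty_of_bounded (hYne (cl n)) (hXne n)
        (hYcomp _).isBounded (hXcomp n).isBounded
      calc Metric.infDist (xhat n) (Xset n)
          ≤ Metric.hausdorffDist (Yset (cl n)) (Xset n) :=
            Metric.infDist_le_hausdorffDist_of_mem (hxhatY n) hfin
        _ = Metric.hausdorffDist (Xset n) (Yset (cl n)) := Metric.hausdorffDist_comm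
        _ ≤ D := hhaus n
    exact shrink_mem (hXcomp n).isClosed (hXconv n) (hXS n) (hXS n (hz.1 n)) hρ
      (hballX n) (hYS _ (hxhatY n)) hD0 hinfd
  have havg_affine : ∀ (a b : ℝ) (p q : Profile N T),
      avg (WithLp.toLp 2 (fun n => a • p n + b • q n) : Profile N T) = a • avg p + b • avg q := by
    intro a b p q
    have h1 : ∀ (c : ℝ) (r : Profile N T),
        ∑ n, (c • r n) = c • ∑ n, r n := by
      intro c r; rw [Finset.smul_sum]
    unfold avg
    simp only [PiLp.toLp_apply]
    rw [Finset.sum_add_distrib, h1, h1, smul_add, smul_comm ((1:ℝ)/N) a, smul_comm ((1:ℝ)/N) b]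
  have hx'avg : avg x' = (1 - t₁) • v + t₁ • avg z := by
    rw [hx'def, havg_affine, havg_xhat]
  have hx'A : avg x' ∈ A := by
    rw [hx'avg]
    refine hAconv ?_ hz.2 (by linarith) ht₁0 (by ring)
    rw [hv]
    exact hxI.2
  have hx'XA : x' ∈ XA Xset A := ⟨hx'X, hx'A⟩
  have hx'close : ∀ n, ‖x' n - xhat n‖ ≤ 2*R*(D/ρ) := by
    intro n
    have h1 : x' n - xhat n = t₁ • (z n - xhat n) := by
      simp only [hx'def, PiLp.toLp_apply]; module
    rw [h1, norm_smul, Real.norm_eq_abs, abs_of_nonneg ht₁0]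
    have h2 : ‖z n - xhat n‖ ≤ 2*R := by
      calc ‖z n - xhat n‖ ≤ ‖z n‖ + ‖xhat n‖ := norm_sub_le _ _
        _ ≤ 2*R := by linarith [hzR n, hxhatR n]
    calc t₁ * ‖z n - xhat n‖ ≤ (D/ρ) * (2*R) := by
          apply mul_le_mul ht₁le h2 (norm_nonneg _) (by positivity)
      _ = 2*R*(D/ρ) := by ring
  -- shrink sb into X^I(A)
  set t₂ : ℝ := D/(D+r₂) with ht₂def
  have ht₂0 : 0 ≤ t₂ := by positivity
  have hDr₂pos : 0 < D + r₂ := by linarith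
  have ht₂le : t₂ ≤ 2*D/ρ := by
    rw [ht₂def, div_le_div_iff₀ hDr₂pos hρ]
    nlinarith [hr₂def, hD0, hDρ]
  set y : I → Vec T := fun i => (1 - t₂) • sb i + t₂ • zt i with hydef
  have hsbD : ∀ i, Metric.infDist (sb i) (Yset i) ≤ D := by
    intro i
    have hxstarD : ∀ n : Fin N, ∃ w ∈ Yset (cl n), dist (xstar n) w ≤ D := by
      intro n
      have hfin := Metric.hausdorffEdist_ne_top_of_nonempty_of_bounded (hXne n) (hYne (cl n))
        (hXcomp n).isBounded (hYcomp _).isBounded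
      have h1 : Metric.infDist (xstar n) (Yset (cl n)) ≤ D :=
        le_trans (Metric.infDist_le_hausdorffDist_of_mem (hxstar.1 n) hfin) (hhaus n)
      obtain ⟨w, hw, hwd⟩ := (hYcomp (cl n)).exists_infDist_eq_dist (hYne _) (xstar n)
      exact ⟨w, hw, by rw [← hwd]; exact h1⟩
    choose w hwY hwd using hxstarD
    have hwbar : ((clCard cl i:ℝ))⁻¹ • ∑ n ∈ fiber cl i, w n ∈ Yset i := by
      rw [Finset.smul_sum]
      refine Convex.sum_mem (hYconv i) (fun n _ => by positivity) ?_ (fun n hn => ?_)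
      · rw [Finset.sum_const, card_fiber, nsmul_eq_mul,
          mul_inv_cancel₀ (ne_of_gt (hkpos i))]
      · rw [← hmemfib hn]; exact hwY n
    refine le_trans (Metric.infDist_le_dist_of_mem hwbar) ?_
    rw [hsbdef]
    simp only [dist_eq_norm, ← smul_sub, ← Finset.sum_sub_distrib]
    rw [norm_smul, Real.norm_eq_abs, abs_of_nonneg (by positivity)]
    have h2 : ‖∑ n ∈ fiber cl i, (xstar n - w n)‖ ≤ (clCard cl i : ℝ) * D := by
      calc ‖∑ n ∈ fiber cl i, (xstar n - w n)‖ ≤ ∑ n ∈ fiber cl i, ‖xstar n - w n‖ :=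
            norm_sum_le _ _
        _ ≤ ∑ _n ∈ fiber cl i, D := Finset.sum_le_sum (fun n _ => by
            rw [← dist_eq_norm]; exact hwd n)
        _ = (clCard cl i : ℝ) * D := by rw [Finset.sum_const, card_fiber, nsmul_eq_mul]
    calc ((clCard cl i:ℝ))⁻¹ * ‖∑ n ∈ fiber cl i, (xstar n - w n)‖
        ≤ ((clCard cl i:ℝ))⁻¹ * ((clCard cl i : ℝ) * D) := by
          apply mul_le_mul_of_nonneg_left h2 (by positivity)
      _ = D := by field_simp [(hkpos i).ne']
  have hyY : ∀ i, y i ∈ Yset i := by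
    intro i
    exact shrink_mem (hYcomp i).isClosed (hYconv i) (hYS i) (hztS i) hr₂pos
      (hballYI i) (hsbS i) hD0 (hsbD i)
  have havgI_affine : ∀ (a b : ℝ) (p q : I → Vec T),
      avgI cl (fun i => a • p i + b • q i) = a • avgI cl p + b • avgI cl q := by
    intro a b p q
    have h1 : ∀ (c : ℝ) (r : I → Vec T),
        ∑ i, (clCard cl i:ℝ) • (c • r i) = c • ∑ i, (clCard cl i:ℝ) • r i := by
      intro c r; rw [Finset.smul_sum]
      exact Finset.sum_congr rfl fun i _ => smul_comm _ _ _
    unfold avgI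
    simp only [smul_add, Finset.sum_add_distrib, h1]
    module
  have havgI_group : ∀ (x : Profile N T),
      avgI cl (fun i => ((clCard cl i:ℝ))⁻¹ • ∑ n ∈ fiber cl i, x n) = avg x := by
    intro x
    unfold avgI avg
    congr 1
    rw [← sum_fiber_eq cl x]
    refine Finset.sum_congr rfl fun i _ => ?_
    rw [smul_smul, mul_inv_cancel₀ (ne_of_gt (hkpos i)), one_smul]
  have hyA : avgI cl y ∈ A := by
    have h1 : avgI cl y = (1 - t₂) • avg xstar + t₂ • avg z := by
      rw [hydef, havgI_affine, hsbdef, hztdef, havgI_group, havgI_group]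
    rw [h1]
    exact hAconv hxstar.2 hz.2 (by
      have : t₂ ≤ 1 := by rw [ht₂def, div_le_one (by linarith)]; linarith
      linarith) ht₂0 (by ring)
  have hyXIA : y ∈ XIA cl Yset A := ⟨hyY, hyA⟩
  have hyclose : ∀ i, ‖y i - sb i‖ ≤ 2*R*(2*D/ρ) := by
    intro i
    have h1 : y i - sb i = t₂ • (zt i - sb i) := by
      simp only [hydef]; module
    rw [h1, norm_smul, Real.norm_eq_abs, abs_of_nonneg ht₂0]
    have h2 : ‖zt i - sb i‖ ≤ 2*R := by
      calc ‖zt i - sb i‖ ≤ ‖zt i‖ + ‖sb i‖ := norm_sub_le _ _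
        _ ≤ 2*R := by linarith [hztR i, hsbR i]
    calc t₂ * ‖zt i - sb i‖ ≤ (2*D/ρ) * (2*R) := by
          apply mul_le_mul ht₂le h2 (norm_nonneg _) (by positivity)
      _ = 2*R*(2*D/ρ) := by ring
  -- construct g ∈ Φ(xhat) close to the auxiliary subgradients
  have hsubF : ∀ n, hI (cl n) ∈ subdiff (fun u => F (cl n) u v) (xhat n) := fun n => hhI (cl n)
  have hgex : ∀ n, ∃ gn, gn ∈ subdiff (fun u => f n u v) (xhat n) ∧ dist (hI (cl n)) gn ≤ Df := by
    intro n
    have hne : (subdiff (fun u => f n u v) (xhat n)).Nonempty := subdiff_nonempty' (hfconv n v) _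
    have hbdf : Bornology.IsBounded (subdiff (fun u => f n u v) (xhat n)) := by
      refine Bornology.IsBounded.subset (Metric.isBounded_closedBall (x := (0:Vec T)) (r := L₁))
        (fun gg hgg => ?_)
      rw [Metric.mem_closedBall, dist_zero_right]
      exact norm_le_of_mem_subdiff' hL₁.le (hfLip n v hvR) hgg
    have hbdF : Bornology.IsBounded (subdiff (fun u => F (cl n) u v) (xhat n)) := by
      refine Bornology.IsBounded.subset (Metric.isBounded_closedBall (x := (0:Vec T)) (r := L₁))
        (fun gg hgg => ?_)
      rw [Metric.mem_closedBall, dist_zero_right]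
      exact hFbound (cl n) (xI (cl n)) (hxI.1 _) v hvR gg hgg
    have hneF : (subdiff (fun u => F (cl n) u v) (xhat n)).Nonempty := ⟨hI (cl n), hsubF n⟩
    have hfin := Metric.hausdorffEdist_ne_top_of_nonempty_of_bounded hneF hne hbdF hbdf
    have hinf : Metric.infDist (hI (cl n)) (subdiff (fun u => f n u v) (xhat n)) ≤ Df :=
      le_trans (Metric.infDist_le_hausdorffDist_of_mem (hsubF n) hfin)
        (hsubgrad n (xI (cl n)) (hxI.1 _) v hvR)
    obtain ⟨gn, hgn, hgnd⟩ := (isClosed_subdiff' _ _).exists_infDist_eq_dist hne (hI (cl n))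
    exact ⟨gn, hgn, by rw [← hgnd]; exact hinf⟩
  choose g hgmem hgdist using hgex
  set G : Profile N T := WithLp.toLp 2 (fun n => g n) with hGdef
  have hGPhi : G ∈ Phi f xhat := by
    intro n
    have h1 := hgmem n
    simp only [Phi, Set.mem_setOf_eq, havg_xhat]
    exact h1
  have hDf0 : 0 ≤ Df := le_trans dist_nonneg (hgdist ⟨0, hN⟩)
  -- monotonicity
  have hMono := hmono xhat xstar hxhatR hxstarR G hGPhi gstar hgstar
  -- bound the inner product
  have hsplitInner : ⟪G - gstar, xhat - xstar⟫ = ∑ n, ⟪g n - gstar n, xhat n - xstar n⟫ := by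
    rw [PiLp.inner_apply]
    rfl
  have hpern : ∀ n, ⟪g n - gstar n, xhat n - xstar n⟫ =
      ⟪g n - hI (cl n), xhat n - xstar n⟫ + ⟪hI (cl n), xhat n - xstar n⟫
      + (⟪gstar n, xstar n - x' n⟫ + ⟪gstar n, x' n - xhat n⟫) := by
    intro n
    simp only [inner_sub_left, inner_sub_right]
    ring
  have hgstarL : ∀ n, ‖gstar n‖ ≤ L₁ :=
    fun n => norm_le_of_mem_subdiff' hL₁.le (hfLip n (avg xstar) havgstarR) (hgstar n)
  have hhIL : ∀ i, ‖hI i‖ ≤ L₁ := fun i => hFbound i (xI i) (hxI.1 i) v hvR _ (hhI i)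
  have hnormsub : ∀ n, ‖xhat n - xstar n‖ ≤ 2*R := by
    intro n
    calc ‖xhat n - xstar n‖ ≤ ‖xhat n‖ + ‖xstar n‖ := norm_sub_le _ _
      _ ≤ 2*R := by linarith [hxhatR n, hxstarR n]
  have hS1 : ∑ n, ⟪g n - hI (cl n), xhat n - xstar n⟫ ≤ N * (Df * (2*R)) := by
    calc ∑ n, ⟪g n - hI (cl n), xhat n - xstar n⟫ ≤ ∑ _n : Fin N, Df * (2*R) := by
          refine Finset.sum_le_sum fun n _ => ?_
          calc ⟪g n - hI (cl n), xhat n - xstar n⟫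
              ≤ ‖g n - hI (cl n)‖ * ‖xhat n - xstar n‖ := real_inner_le_norm _ _
            _ ≤ Df * (2*R) := by
                apply mul_le_mul ?_ (hnormsub n) (norm_nonneg _) hDf0
                rw [← dist_eq_norm, dist_comm]
                exact hgdist n
      _ = N * (Df * (2*R)) := by
          rw [Finset.sum_const, Finset.card_fin, nsmul_eq_mul]
  have hS4 : ∑ n, ⟪gstar n, x' n - xhat n⟫ ≤ N * (L₁ * (2*R*(D/ρ))) := by
    calc ∑ n, ⟪gstar n, x' n - xhat n⟫ ≤ ∑ _n : Fin N, L₁ * (2*R*(D/ρ)) := by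
          refine Finset.sum_le_sum fun n _ => ?_
          calc ⟪gstar n, x' n - xhat n⟫ ≤ ‖gstar n‖ * ‖x' n - xhat n‖ := real_inner_le_norm _ _
            _ ≤ L₁ * (2*R*(D/ρ)) := by
                apply mul_le_mul (hgstarL n) (hx'close n) (norm_nonneg _) hL₁.le
      _ = N * (L₁ * (2*R*(D/ρ))) := by
          rw [Finset.sum_const, Finset.card_fin, nsmul_eq_mul]
  have hS3 : ∑ n, ⟪gstar n, xstar n - x' n⟫ ≤ 0 := by
    have h0 := hSVWE x' hx'XA
    have heq : ⟪gstar, x' - xstar⟫ = ∑ n, ⟪gstar n, x' n - xstar n⟫ := by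
      rw [PiLp.inner_apply]
      rfl
    have h1 : ∑ n, ⟪gstar n, xstar n - x' n⟫ = -∑ n, ⟪gstar n, x' n - xstar n⟫ := by
      rw [← Finset.sum_neg_distrib]
      refine Finset.sum_congr rfl fun n _ => ?_
      simp only [inner_sub_right]
      ring
    rw [heq] at h0
    rw [h1]
    linarith
  have hS2 : ∑ n, ⟪hI (cl n), xhat n - xstar n⟫ ≤ N * (L₁ * (2*R*(2*D/ρ))) := by
    have hfw : ∑ n, ⟪hI (cl n), xhat n - xstar n⟫
        = ∑ i, ∑ n ∈ fiber cl i, ⟪hI (cl n), xhat n - xstar n⟫ :=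
      (sum_fiber_eq cl _).symm
    have hinner_i : ∀ i, ∑ n ∈ fiber cl i, ⟪hI (cl n), xhat n - xstar n⟫
        = (clCard cl i : ℝ) * ⟪hI i, xI i - sb i⟫ := by
      intro i
      have h1 : ∑ n ∈ fiber cl i, ⟪hI (cl n), xhat n - xstar n⟫
          = ∑ n ∈ fiber cl i, ⟪hI i, xI i - xstar n⟫ := by
        refine Finset.sum_congr rfl fun n hn => ?_
        have hcln : cl n = i := hmemfib hn
        have hx : xhat n = xI i := by rw [show xhat n = xI (cl n) from rfl, hcln]
        rw [hx, hcln]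
      rw [h1]
      have h2 : ∑ n ∈ fiber cl i, ⟪hI i, xI i - xstar n⟫
          = (clCard cl i:ℝ) * ⟪hI i, xI i⟫ - ⟪hI i, ∑ n ∈ fiber cl i, xstar n⟫ := by
        rw [inner_sum]
        simp only [inner_sub_right]
        rw [Finset.sum_sub_distrib, Finset.sum_const, card_fiber, nsmul_eq_mul]
      have h3 : ⟪hI i, sb i⟫ = (clCard cl i:ℝ)⁻¹ * ⟪hI i, ∑ n ∈ fiber cl i, xstar n⟫ := by
        rw [hsbdef, real_inner_smul_right]
      rw [h2, inner_sub_right, h3, mul_sub]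
      congr 1
      rw [← mul_assoc, mul_inv_cancel₀ (hkpos i).ne', one_mul]
    have hdec : ∀ i, (clCard cl i : ℝ) * ⟪hI i, xI i - sb i⟫
        = -((clCard cl i : ℝ) * ⟪hI i, y i - xI i⟫) + (clCard cl i : ℝ) * ⟪hI i, y i - sb i⟫ := by
      intro i
      simp only [inner_sub_right]
      ring
    have hVI := hSVWEI y hyXIA
    have hterm2 : ∑ i, (clCard cl i:ℝ) * ⟪hI i, y i - sb i⟫
        ≤ ∑ i, (clCard cl i:ℝ) * (L₁ * (2*R*(2*D/ρ))) := by
      refine Finset.sum_le_sum fun i _ => ?_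
      apply mul_le_mul_of_nonneg_left ?_ (hkpos i).le
      calc ⟪hI i, y i - sb i⟫ ≤ ‖hI i‖ * ‖y i - sb i‖ := real_inner_le_norm _ _
        _ ≤ L₁ * (2*R*(2*D/ρ)) := by
            apply mul_le_mul (hhIL i) (hyclose i) (norm_nonneg _) hL₁.le
    have hsum2 : ∑ i, (clCard cl i:ℝ) * (L₁ * (2*R*(2*D/ρ))) = N * (L₁ * (2*R*(2*D/ρ))) := by
      rw [← Finset.sum_mul, hsumk]
    rw [hfw]
    rw [Finset.sum_congr rfl fun i _ => hinner_i i]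
    rw [Finset.sum_congr rfl fun i _ => hdec i]
    rw [Finset.sum_add_distrib, Finset.sum_neg_distrib]
    have : -∑ i, (clCard cl i:ℝ) * ⟪hI i, y i - xI i⟫ ≤ 0 := by linarith
    linarith [hterm2, hsum2 ▸ hterm2]
  have hRHS : ⟪G - gstar, xhat - xstar⟫ ≤ N * K := by
    rw [hsplitInner, Finset.sum_congr rfl fun n _ => hpern n,
      Finset.sum_add_distrib, Finset.sum_add_distrib, Finset.sum_add_distrib]
    rw [hK]
    have h1 := hS1; have h2 := hS2; have h3 := hS3; have h4 := hS4
    have hKey : (N:ℝ) * (Df * (2*R)) + N * (L₁ * (2*R*(2*D/ρ))) + N * (L₁ * (2*R*(D/ρ)))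
        = N * (2 * R * (3 * L₁ * D / ρ + Df)) := by
      field_simp
      ring
    linarith
  have hfinal : (N:ℝ) * β * ‖avg xhat - avg xstar‖^2 ≤ N * K := le_trans hMono hRHS
  have hβle : β * ‖v - avg xstar‖^2 ≤ K := by
    rw [← havg_xhat]
    have h2 : (N:ℝ) * (β * ‖avg xhat - avg xstar‖^2) ≤ N * K := by
      have : (N:ℝ) * β * ‖avg xhat - avg xstar‖^2
          = N * (β * ‖avg xhat - avg xstar‖^2) := by ring
      linarith [this ▸ hfinal]
    exact le_of_mul_le_mul_left h2 hNpos
  have hX2 : ‖v - avg xstar‖^2 ≤ K/β := by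
    rw [le_div_iff₀ hβ]
    nlinarith [hβle]
  calc ‖v - avg xstar‖ = Real.sqrt (‖v - avg xstar‖^2) := (Real.sqrt_sq (norm_nonneg _)).symm
    _ ≤ Real.sqrt (K/β) := Real.sqrt_le_sqrt hX2
end
end

section
/- Assume each f_n is convex (jointly) on ℝ^T × ℝ^T, f_n(u,·) is L₂-Lipschitz on ℝ^T for every n and u (L₂ > 0), the clustering hypotheses (a)–(d) hold, and Φ is α-strongly monotone on B_R = {x ∈ (ℝ^T)^N : ‖x_n‖ ≤ R for all n} with α > 0. Let x = (x_i)_{i∈I} be an SVWE of the auxiliary population game with average x̄ = (1/N)∑_i |N_i|·x_i, and x̂ ∈ X(A) a VNE of the original atomic game with average x̄̂ = (1/N)∑_n x̂_n. Then ‖ψ(x) − x̂‖ ≤ L₂/(α·√N) + √(N·K/α) and ‖x̄ − x̄̂‖ ≤ L₂/(α·N) + √(K/α), where K = 2R·(3·L₁·D/ρ + D_f). -/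
open scoped RealInnerProductSpace

noncomputable section

lemma quad_bound (α b c d : ℝ) (hα : 0 < α) (hd : 0 ≤ d) (hb : 0 ≤ b) (hc : 0 ≤ c)
    (h : α * d ^ 2 ≤ b * d + c) : d ≤ b / α + Real.sqrt (c / α) := by
  by_contra hcon
  push_neg at hcon
  set s := Real.sqrt (c / α) with hsdef
  have hs : s ^ 2 = c / α := Real.sq_sqrt (div_nonneg hc hα.le)
  have hs0 : 0 ≤ s := Real.sqrt_nonneg (c / α)
  have hd0 : 0 < d := lt_of_le_of_lt (add_nonneg (div_nonneg hb hα.le) hs0) hcon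
  have h3 : α * d * (b / α + s) < α * d * d := mul_lt_mul_of_pos_left hcon (mul_pos hα hd0)
  have h4 : α * d * (b / α) = b * d := by field_simp
  have h5 : s ≤ d := le_of_lt (lt_of_le_of_lt (le_add_of_nonneg_left (div_nonneg hb hα.le)) hcon)
  have h7 : α * s ^ 2 = c := by rw [hs]; field_simp
  nlinarith [mul_le_mul_of_nonneg_left (mul_le_mul_of_nonneg_right h5 hs0) hα.le]

lemma sum_norm_le_sqrt {N T : ℕ} (v : Profile N T) :
    ∑ n, ‖v n‖ ≤ Real.sqrt N * ‖v‖ := by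
  have h1 : (∑ n, ‖v n‖) ^ 2 ≤ (N : ℝ) * ∑ n, ‖v n‖ ^ 2 := by
    have := sq_sum_le_card_mul_sum_sq (s := (Finset.univ : Finset (Fin N)))
      (f := fun n => ‖v n‖)
    simpa using this
  have h2 : ‖v‖ ^ 2 = ∑ n, ‖v n‖ ^ 2 := PiLp.norm_sq_eq_of_L2 _ v
  have h3 : (∑ n, ‖v n‖) ^ 2 ≤ (Real.sqrt N * ‖v‖) ^ 2 := by
    rw [mul_pow, Real.sq_sqrt (Nat.cast_nonneg N), h2]
    exact h1
  have h4 : 0 ≤ ∑ n, ‖v n‖ := Finset.sum_nonneg fun n _ => norm_nonneg _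
  nlinarith [Real.sqrt_nonneg (N : ℝ), norm_nonneg v,
    mul_nonneg (Real.sqrt_nonneg (N : ℝ)) (norm_nonneg v)]

lemma norm_le_sqrt_mul {N T : ℕ} (v : Profile N T) (M : ℝ) (hM : 0 ≤ M)
    (h : ∀ n, ‖v n‖ ≤ M) : ‖v‖ ≤ Real.sqrt N * M := by
  have h2 : ‖v‖ ^ 2 = ∑ n, ‖v n‖ ^ 2 := PiLp.norm_sq_eq_of_L2 _ v
  have h3 : ‖v‖ ^ 2 ≤ (N : ℝ) * M ^ 2 := by
    rw [h2]
    calc ∑ n, ‖v n‖ ^ 2 ≤ ∑ _n : Fin N, M ^ 2 :=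
          Finset.sum_le_sum fun n _ => pow_le_pow_left₀ (norm_nonneg _) (h n) 2
      _ = (N : ℝ) * M ^ 2 := by
          rw [Finset.sum_const, Finset.card_univ, Fintype.card_fin, nsmul_eq_mul]
  have h4 : (Real.sqrt N * M) ^ 2 = (N : ℝ) * M ^ 2 := by
    rw [mul_pow, Real.sq_sqrt (Nat.cast_nonneg N)]
  nlinarith [norm_nonneg v, Real.sqrt_nonneg (N : ℝ),
    mul_nonneg (Real.sqrt_nonneg (N : ℝ)) hM]

lemma subdiff_isClosed {T : ℕ} (φ : Vec T → ℝ) (x : Vec T) : IsClosed (subdiff φ x) := by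
  have : subdiff φ x = ⋂ y, {g : Vec T | φ x + ⟪g, y - x⟫ ≤ φ y} := by
    ext g; simp [subdiff, Set.mem_iInter]
  rw [this]
  apply isClosed_iInter
  intro y
  have hcont : Continuous fun g : Vec T => φ x + ⟪g, y - x⟫ := by
    apply continuous_const.add
    exact continuous_inner.comp (continuous_id.prodMk continuous_const)
  exact isClosed_le hcont continuous_const

lemma subdiff_norm_le {T : ℕ} (φ : Vec T → ℝ) (x : Vec T) (L : ℝ) (hL : 0 ≤ L)
    (hφ : ∀ y, φ y - φ x ≤ L * ‖y - x‖) (g : Vec T) (hg : g ∈ subdiff φ x) : ‖g‖ ≤ L := by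
  have h1 := hg (x + g)
  simp only [add_sub_cancel_left] at h1
  have h2 := hφ (x + g)
  simp only [add_sub_cancel_left] at h2
  rw [real_inner_self_eq_norm_sq] at h1
  rcases eq_or_ne g 0 with h | h
  · rw [h, norm_zero]; exact hL
  · have h3 : 0 < ‖g‖ := norm_pos_iff.mpr h
    nlinarith

lemma exists_close_of_hausdorff {T : ℕ} (Xs Ys : Set (Vec T)) (hXne : Xs.Nonempty)
    (hYne : Ys.Nonempty) (hXb : Bornology.IsBounded Xs) (hYb : Bornology.IsBounded Ys)
    (hYcl : IsClosed Ys) (x : Vec T) (hx : x ∈ Xs) (D : ℝ)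
    (h : Metric.hausdorffDist Xs Ys ≤ D) : ∃ y ∈ Ys, dist x y ≤ D := by
  have hne : EMetric.hausdorffEdist Xs Ys ≠ ⊤ :=
    Metric.hausdorffEdist_ne_top_of_nonempty_of_bounded hXne hYne hXb hYb
  have h1 : Metric.infDist x Ys ≤ D :=
    le_trans (Metric.infDist_le_hausdorffDist_of_mem hx hne) h
  obtain ⟨y, hy, hyd⟩ := hYcl.exists_infDist_eq_dist hYne x
  exact ⟨y, hy, by rw [← hyd]; exact h1⟩

lemma avg_mem_affineSpan {T : ℕ} (Q : AffineSubspace ℝ (Vec T)) {γ : Type*}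
    (s : Finset γ) (hne : s.Nonempty) (p : γ → Vec T) (hp : ∀ n ∈ s, p n ∈ Q) :
    ((s.card : ℝ)⁻¹) • ∑ n ∈ s, p n ∈ Q := by
  obtain ⟨n₀, hn₀⟩ := hne
  have hcard : (0 : ℝ) < s.card := by
    exact_mod_cast Finset.card_pos.mpr ⟨n₀, hn₀⟩
  have hd : ((s.card : ℝ)⁻¹) • ∑ n ∈ s, (p n - p n₀) ∈ Q.direction := by
    apply Submodule.smul_mem
    apply Submodule.sum_mem
    intro n hn
    exact AffineSubspace.vsub_mem_direction (hp n hn) (hp n₀ hn₀)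
  have hkey : ((s.card : ℝ)⁻¹) • ∑ n ∈ s, p n
      = (((s.card : ℝ)⁻¹) • ∑ n ∈ s, (p n - p n₀)) +ᵥ p n₀ := by
    rw [Finset.sum_sub_distrib, smul_sub, Finset.sum_const]
    have : ((s.card : ℝ)⁻¹) • (s.card • p n₀) = p n₀ := by
      rw [← Nat.cast_smul_eq_nsmul ℝ, smul_smul, inv_mul_cancel₀ (ne_of_gt hcard), one_smul]
    rw [this, vadd_eq_add]
    abel
  rw [hkey]
  exact AffineSubspace.vadd_mem_of_mem_direction hd (hp n₀ hn₀)

lemma avg_mem_convex {T : ℕ} (C : Set (Vec T)) (hC : Convex ℝ C) {γ : Type*}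
    (s : Finset γ) (hne : s.Nonempty) (p : γ → Vec T) (hp : ∀ n ∈ s, p n ∈ C) :
    ((s.card : ℝ)⁻¹) • ∑ n ∈ s, p n ∈ C := by
  obtain ⟨n₀, hn₀⟩ := hne
  have hcard : (0 : ℝ) < s.card := by exact_mod_cast Finset.card_pos.mpr ⟨n₀, hn₀⟩
  rw [Finset.smul_sum]
  apply hC.sum_mem
  · intro n hn; positivity
  · rw [Finset.sum_const, nsmul_eq_mul, mul_inv_cancel₀ (ne_of_gt hcard)]
  · exact hp

lemma avg_norm_le {T : ℕ} {γ : Type*} (s : Finset γ) (hne : s.Nonempty)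
    (p : γ → Vec T) (M : ℝ) (hp : ∀ n ∈ s, ‖p n‖ ≤ M) :
    ‖((s.card : ℝ)⁻¹) • ∑ n ∈ s, p n‖ ≤ M := by
  have hcard : (0 : ℝ) < s.card := by
    exact_mod_cast Finset.card_pos.mpr hne
  rw [norm_smul, Real.norm_eq_abs, abs_of_pos (by positivity)]
  calc (s.card : ℝ)⁻¹ * ‖∑ n ∈ s, p n‖ ≤ (s.card : ℝ)⁻¹ * ∑ n ∈ s, ‖p n‖ := by
        apply mul_le_mul_of_nonneg_left (norm_sum_le _ _) (by positivity)
    _ ≤ (s.card : ℝ)⁻¹ * ∑ _n ∈ s, M := by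
        apply mul_le_mul_of_nonneg_left (Finset.sum_le_sum hp) (by positivity)
    _ = M := by
        rw [Finset.sum_const, nsmul_eq_mul, ← mul_assoc, inv_mul_cancel₀ (ne_of_gt hcard), one_mul]

lemma combo_mem {T : ℕ} (C : Set (Vec T)) (hC : Convex ℝ C)
    (ctr : Vec T) (hctr : ctr ∈ affineSpan ℝ C)
    (r D μ : ℝ) (hμ0 : 0 ≤ μ) (hμ1 : μ ≤ 1) (hD : 0 ≤ D)
    (y p : Vec T) (hy : y ∈ affineSpan ℝ C) (hp : p ∈ C) (hyp : ‖y - p‖ ≤ D)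
    (hball : ∀ w ∈ affineSpan ℝ C, dist ctr w ≤ r → w ∈ C)
    (hcond : (1 - μ) * D ≤ μ * r) :
    (1 - μ) • y + μ • ctr ∈ C := by
  rcases eq_or_lt_of_le hμ0 with hμz | hμpos
  · -- μ = 0 : then D ≤ 0 so y = p ∈ C
    have hμz' : μ = 0 := hμz.symm
    subst hμz'
    have hD0 : D ≤ 0 := by simpa using hcond
    have : y = p := by
      have : ‖y - p‖ = 0 := le_antisymm (le_trans hyp hD0) (norm_nonneg _)
      rwa [norm_sub_eq_zero_iff] at this
    simpa [this] using hp
  · set q : Vec T := ctr + (μ⁻¹ * (1 - μ)) • (y - p) with hq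
    have hqspan : q ∈ affineSpan ℝ C := by
      have h1 : y -ᵥ p ∈ (affineSpan ℝ C).direction :=
        AffineSubspace.vsub_mem_direction hy (subset_affineSpan ℝ C hp)
      have h2 : (μ⁻¹ * (1 - μ)) • (y -ᵥ p) ∈ (affineSpan ℝ C).direction :=
        Submodule.smul_mem _ _ h1
      have := AffineSubspace.vadd_mem_of_mem_direction h2 hctr
      simpa [vsub_eq_sub, vadd_eq_add, add_comm] using this
    have hnn : (0:ℝ) ≤ μ⁻¹ * (1 - μ) :=
      mul_nonneg (inv_nonneg.mpr hμ0) (by linarith)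
    have hqC : q ∈ C := by
      apply hball q hqspan
      rw [dist_eq_norm, hq]
      have h0 : ctr - (ctr + (μ⁻¹ * (1 - μ)) • (y - p)) = -((μ⁻¹ * (1 - μ)) • (y - p)) := by
        abel
      rw [h0, norm_neg, norm_smul, Real.norm_eq_abs, abs_of_nonneg hnn, mul_assoc]
      calc μ⁻¹ * ((1 - μ) * ‖y - p‖) ≤ μ⁻¹ * ((1 - μ) * D) := by
            apply mul_le_mul_of_nonneg_left _ (inv_nonneg.mpr hμ0)
            exact mul_le_mul_of_nonneg_left hyp (by linarith)
        _ ≤ μ⁻¹ * (μ * r) := mul_le_mul_of_nonneg_left hcond (inv_nonneg.mpr hμ0)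
        _ = r := by field_simp
    have hμμ : μ * (μ⁻¹ * (1 - μ)) = 1 - μ := by field_simp
    have hkey : (1 - μ) • y + μ • ctr = (1 - μ) • p + μ • q := by
      rw [hq, smul_add, smul_smul, hμμ, smul_sub]
      abel
    rw [hkey]
    exact hC hp hqC (by linarith) hμ0 (by ring)


/-- key separation lemma: approximate subgradients are close to true subgradients. -/
lemma exists_subdiff_close {T : ℕ} (φ : Vec T → ℝ) (hφ : ConvexOn ℝ Set.univ φ)
    (x g : Vec T) (c : ℝ) (hc : 0 ≤ c)
    (hg : ∀ y, φ x + ⟪g, y - x⟫ - c * ‖y - x‖ ≤ φ y) :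
    ∃ h ∈ subdiff φ x, ‖h - g‖ ≤ c := by
  set m : Vec T → ℝ := fun u => φ (u + x) - φ x - ⟪g, u⟫ with hm
  have hmconv : ∀ (u v : Vec T) (a b : ℝ), 0 ≤ a → 0 ≤ b → a + b = 1 →
      m (a • u + b • v) ≤ a * m u + b * m v := by
    intro u v a b ha hb hab
    have hx : a • x + b • x = x := by rw [← add_smul, hab, one_smul]
    have h1 : a • (u + x) + b • (v + x) = (a • u + b • v) + x := by
      rw [smul_add, smul_add, add_add_add_comm, hx]
    have h2 := hφ.2 (Set.mem_univ (u + x)) (Set.mem_univ (v + x)) ha hb hab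
    simp only [smul_eq_mul] at h2
    have h3 : ⟪g, a • u + b • v⟫ = a * ⟪g, u⟫ + b * ⟪g, v⟫ := by
      rw [inner_add_right, real_inner_smul_right, real_inner_smul_right]
    have hphix : a * φ x + b * φ x = φ x := by rw [← add_mul, hab, one_mul]
    simp only [hm, ← h1, h3]
    linarith [h2, hphix]
  have hm0 : m 0 = 0 := by simp [hm]
  have hmlb : ∀ u, -(c * ‖u‖) ≤ m u := by
    intro u
    have := hg (u + x)
    simp only [add_sub_cancel_right] at this
    simp only [hm]; linarith
  -- separation in (Vec T) × ℝ
  set s : Set (Vec T × ℝ) := {p | c * ‖p.1‖ + p.2 < 0} with hs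
  set t : Set (Vec T × ℝ) := {p | m p.1 ≤ p.2} with ht
  have hsconv : Convex ℝ s := by
    intro p hp q hq a b ha hb hab
    simp only [hs, Set.mem_setOf_eq] at *
    have hn : ‖a • p.1 + b • q.1‖ ≤ a * ‖p.1‖ + b * ‖q.1‖ := by
      calc ‖a • p.1 + b • q.1‖ ≤ ‖a • p.1‖ + ‖b • q.1‖ := norm_add_le _ _
        _ = a * ‖p.1‖ + b * ‖q.1‖ := by
            rw [norm_smul, norm_smul, Real.norm_eq_abs, Real.norm_eq_abs,
              abs_of_nonneg ha, abs_of_nonneg hb]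
    have key : a * (c * ‖p.1‖ + p.2) + b * (c * ‖q.1‖ + q.2) < 0 := by
      rcases eq_or_lt_of_le ha with h | h
      · have hb1 : b = 1 := by linarith
        simp only [← h, zero_mul, zero_add, hb1, one_mul]; exact hq
      · nlinarith
    have : c * ‖a • p.1 + b • q.1‖ + (a * p.2 + b * q.2)
        ≤ a * (c * ‖p.1‖ + p.2) + b * (c * ‖q.1‖ + q.2) := by nlinarith
    calc c * ‖(a • p + b • q).1‖ + (a • p + b • q).2
        = c * ‖a • p.1 + b • q.1‖ + (a * p.2 + b * q.2) := rfl
      _ < 0 := lt_of_le_of_lt this key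
  have hsopen : IsOpen s := by
    have : Continuous fun p : Vec T × ℝ => c * ‖p.1‖ + p.2 := by fun_prop
    exact isOpen_lt this continuous_const
  have htconv : Convex ℝ t := by
    intro p hp q hq a b ha hb hab
    simp only [ht, Set.mem_setOf_eq] at *
    have h1 := hmconv p.1 q.1 a b ha hb hab
    have h2 : (a • p + b • q).1 = a • p.1 + b • q.1 := rfl
    have h3 : (a • p + b • q).2 = a * p.2 + b * q.2 := rfl
    rw [h2, h3]
    calc m (a • p.1 + b • q.1) ≤ a * m p.1 + b * m q.1 := h1
      _ ≤ a * p.2 + b * q.2 := by nlinarith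
  have hdisj : Disjoint s t := by
    rw [Set.disjoint_left]
    intro p hp hpt
    simp only [hs, Set.mem_setOf_eq] at hp
    simp only [ht, Set.mem_setOf_eq] at hpt
    have := hmlb p.1
    linarith
  obtain ⟨f, u₀, hfs, hft⟩ := geometric_hahn_banach_open hsconv hsopen htconv hdisj
  have hu₀le : u₀ ≤ 0 := by
    have : ((0 : Vec T), (0 : ℝ)) ∈ t := by simp [ht, hm0]
    have := hft _ this
    have h0 : f ((0 : Vec T), (0:ℝ)) = 0 := map_zero f
    linarith [this, h0]
  have hf0r : ∀ r : ℝ, f ((0 : Vec T), r) = r * f ((0 : Vec T), (1:ℝ)) := by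
    intro r
    have : ((0 : Vec T), r) = r • ((0 : Vec T), (1:ℝ)) := by simp
    rw [this, map_smul]; rfl
  set s₀ : ℝ := f ((0 : Vec T), (1:ℝ)) with hs₀
  have hs₀pos : 0 < s₀ := by
    by_contra hcon
    push_neg at hcon
    have h1 : ((0 : Vec T), (-1 : ℝ)) ∈ s := by
      simp only [hs, Set.mem_setOf_eq, norm_zero, mul_zero, zero_add]; norm_num
    have h2 := hfs _ h1
    rw [hf0r] at h2
    nlinarith
  have hu₀ge : 0 ≤ u₀ := by
    by_contra hcon
    push_neg at hcon
    -- point (0, u₀/(2 s₀)) lies in s and f of it = u₀/2 ≥ u₀ contradiction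
    have h1 : ((0 : Vec T), u₀ / (2 * s₀)) ∈ s := by
      simp only [hs, Set.mem_setOf_eq, norm_zero, mul_zero, zero_add]
      apply div_neg_of_neg_of_pos hcon; linarith
    have h2 := hfs _ h1
    rw [hf0r] at h2
    have : u₀ / (2 * s₀) * s₀ = u₀ / 2 := by field_simp
    rw [this] at h2
    linarith
  have hu₀ : u₀ = 0 := le_antisymm hu₀le hu₀ge
  -- the linear part
  set ℓ : Vec T →L[ℝ] ℝ := f.comp (ContinuousLinearMap.inl ℝ (Vec T) ℝ) with hℓ
  have hsplit : ∀ (v : Vec T) (r : ℝ), f (v, r) = ℓ v + r * s₀ := by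
    intro v r
    have : (v, r) = ((v, (0:ℝ)) : Vec T × ℝ) + ((0 : Vec T), r) := by simp
    rw [this, map_add, hf0r]
    rfl
  set e : Vec T := -(s₀⁻¹) • ((InnerProductSpace.toDual ℝ (Vec T)).symm ℓ) with he
  have hev : ∀ v, ⟪e, v⟫ = -(s₀⁻¹) * ℓ v := by
    intro v
    rw [he, real_inner_smul_left]
    congr 1
    exact InnerProductSpace.toDual_symm_apply
  -- e is a subgradient of m at 0
  have hesub : ∀ v, ⟪e, v⟫ ≤ m v := by
    intro v
    have h1 : (v, m v) ∈ t := by simp [ht]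
    have h2 := hft _ h1
    rw [hsplit, hu₀] at h2
    rw [hev]
    have h4 : 0 ≤ s₀⁻¹ * (ℓ v + m v * s₀) := mul_nonneg (by positivity) h2
    have h5 : s₀⁻¹ * (ℓ v + m v * s₀) = s₀⁻¹ * ℓ v + m v := by
      field_simp
    linarith
  have hebound : ‖e‖ ≤ c := by
    have key : ∀ v : Vec T, ⟪e, v⟫ ≤ c * ‖v‖ := by
      intro v
      have h1 : ∀ ε > 0, ((-v : Vec T), -(c * ‖v‖) - ε) ∈ s := by
        intro ε hε
        simp only [hs, Set.mem_setOf_eq, norm_neg]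
        linarith
      have h2 : ∀ ε > 0, ℓ (-v) + (-(c * ‖v‖) - ε) * s₀ < 0 := by
        intro ε hε
        have := hfs _ (h1 ε hε)
        rw [hsplit, hu₀] at this
        exact this
      have h3 : ℓ (-v) - c * ‖v‖ * s₀ ≤ 0 := by
        by_contra hcon
        push_neg at hcon
        have hεpos : 0 < (ℓ (-v) - c * ‖v‖ * s₀) / (2 * s₀) := by positivity
        have := h2 _ hεpos
        have hexp : ℓ (-v) + (-(c * ‖v‖) - (ℓ (-v) - c * ‖v‖ * s₀) / (2 * s₀)) * s₀
            = (ℓ (-v) - c * ‖v‖ * s₀) / 2 := by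
          field_simp; ring
        rw [hexp] at this
        linarith
      have h4 : ⟪e, v⟫ = s₀⁻¹ * ℓ (-v) := by
        rw [hev, map_neg]; ring
      rw [h4]
      calc s₀⁻¹ * ℓ (-v) ≤ s₀⁻¹ * (c * ‖v‖ * s₀) := by
            apply mul_le_mul_of_nonneg_left (by linarith) (by positivity)
        _ = c * ‖v‖ := by field_simp
    rcases eq_or_ne e 0 with h | h
    · simp [h, hc]
    · have := key e
      rw [real_inner_self_eq_norm_sq] at this
      have hne : 0 < ‖e‖ := norm_pos_iff.mpr h
      nlinarith
  refine ⟨g + e, ?_, by simpa using hebound⟩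
  intro y
  have := hesub (y - x)
  have hmy : m (y - x) = φ y - φ x - ⟪g, y - x⟫ := by
    simp only [hm, sub_add_cancel]
  rw [hmy] at this
  rw [inner_add_left]
  linarith


/-- deep ball lemma: a point far from the intrinsic frontier has a large intrinsic ball
inside the set. -/
lemma deep_ball_subset {T : ℕ} (X : Set (Vec T)) (hXcl : IsClosed X)
    (z : Vec T) (hzX : z ∈ X) (ρ : ℝ) (hρ : 0 < ρ)
    (hzf : ∀ w ∈ intrinsicFrontier ℝ X, ρ ≤ dist z w) :
    ∀ w ∈ affineSpan ℝ X, dist z w ≤ ρ → w ∈ X := by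
  have hseg : ∀ w ∈ affineSpan ℝ X, ∀ t : ℝ, z + t • (w - z) ∈ affineSpan ℝ X := by
    intro w hw t
    have h1 : w -ᵥ z ∈ (affineSpan ℝ X).direction :=
      AffineSubspace.vsub_mem_direction hw (subset_affineSpan ℝ X hzX)
    have h2 : t • (w -ᵥ z) ∈ (affineSpan ℝ X).direction := Submodule.smul_mem _ _ h1
    have := AffineSubspace.vadd_mem_of_mem_direction h2 (subset_affineSpan ℝ X hzX)
    simpa [vsub_eq_sub, vadd_eq_add, add_comm] using this
  have hdseg : ∀ (w : Vec T) (t : ℝ), 0 ≤ t → dist z (z + t • (w - z)) = t * dist z w := by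
    intro w t ht
    rw [dist_eq_norm]
    have h0 : z - (z + t • (w - z)) = t • (z - w) := by
      rw [smul_sub, smul_sub]; abel
    rw [h0, norm_smul, Real.norm_eq_abs, abs_of_nonneg ht, dist_eq_norm]
  -- first the strict version
  have strict : ∀ w ∈ affineSpan ℝ X, dist z w < ρ → w ∈ X := by
    intro w hw hwd
    by_contra hwX
    set S : Set ℝ := {t ∈ Set.Icc (0:ℝ) 1 | z + t • (w - z) ∈ X} with hS
    have hcont : Continuous fun t : ℝ => z + t • (w - z) := by fun_prop
    have hSclosed : IsClosed S := IsClosed.inter isClosed_Icc (hXcl.preimage hcont)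
    have hSne : S.Nonempty := ⟨0, ⟨le_refl _, zero_le_one⟩, by simpa using hzX⟩
    have hSbdd : BddAbove S := BddAbove.mono (fun t ht => ht.1) (Metric.isBounded_Icc (0:ℝ) 1).bddAbove
    set t₀ : ℝ := sSup S with ht₀
    have ht₀S : t₀ ∈ S := hSclosed.csSup_mem hSne hSbdd
    have ht₀mem : t₀ ∈ Set.Icc (0:ℝ) 1 := ht₀S.1
    set p : Vec T := z + t₀ • (w - z) with hp
    have hpX : p ∈ X := ht₀S.2
    have ht₀ne1 : t₀ ≠ 1 := by
      intro h
      apply hwX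
      have : p = w := by rw [hp, h, one_smul]; abel
      rw [← this]; exact hpX
    have ht₀lt1 : t₀ < 1 := lt_of_le_of_ne ht₀mem.2 ht₀ne1
    have hpspan : p ∈ affineSpan ℝ X := hseg w hw t₀
    have hbeyond : ∀ t : ℝ, t₀ < t → t ≤ 1 → z + t • (w - z) ∉ X := by
      intro t htlt htle hmem
      have : t ∈ S := ⟨⟨le_trans ht₀mem.1 htlt.le, htle⟩, hmem⟩
      exact absurd (le_csSup hSbdd this) (not_le.mpr htlt)
    have hpfr : p ∈ intrinsicFrontier ℝ X := by
      rw [mem_intrinsicFrontier]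
      refine ⟨⟨p, hpspan⟩, ?_, rfl⟩
      rw [frontier_eq_closure_inter_closure]
      constructor
      · exact subset_closure (by simpa using hpX)
      · rw [mem_closure_iff]
        intro o ho hpo
        rw [Metric.isOpen_iff] at ho
        obtain ⟨ε, hε, hball⟩ := ho _ hpo
        set δ : ℝ := min ((1 - t₀)/2) (ε / (2 * (‖w - z‖ + 1))) with hδ
        have hδpos : 0 < δ := by
          apply lt_min (by linarith)
          positivity
        set t₁ : ℝ := t₀ + δ with ht₁
        have ht₁le : t₁ ≤ 1 := by
          have := min_le_left ((1 - t₀)/2) (ε / (2 * (‖w - z‖ + 1)))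
          simp only [ht₁]; linarith
        set q : Vec T := z + t₁ • (w - z) with hq
        have hqspan : q ∈ affineSpan ℝ X := hseg w hw t₁
        refine ⟨⟨q, hqspan⟩, ?_, ?_⟩
        · apply hball
          rw [Metric.mem_ball]
          have hdist : dist (⟨q, hqspan⟩ : affineSpan ℝ X) (⟨p, hpspan⟩ : affineSpan ℝ X)
              = ‖δ • (w - z)‖ := by
            rw [Subtype.dist_eq]
            simp only [dist_eq_norm, hq, hp, ht₁]
            congr 1
            rw [add_smul]
            abel
          rw [hdist, norm_smul, Real.norm_eq_abs, abs_of_pos hδpos]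
          have h2 : δ ≤ ε / (2 * (‖w - z‖ + 1)) := min_le_right _ _
          have h3 : δ * ‖w - z‖ ≤ ε / (2 * (‖w - z‖ + 1)) * (‖w - z‖ + 1) := by
            apply mul_le_mul h2 (by linarith [norm_nonneg (w - z)]) (norm_nonneg _)
            positivity
          have h4 : ε / (2 * (‖w - z‖ + 1)) * (‖w - z‖ + 1) = ε / 2 := by
            field_simp
          rw [h4] at h3
          linarith
        · simp only [Set.mem_compl_iff, Set.mem_preimage]
          exact hbeyond t₁ (by simp only [ht₁]; linarith) ht₁le
    have hfin := hzf p hpfr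
    rw [hp, hdseg w t₀ ht₀mem.1] at hfin
    nlinarith [dist_nonneg (x := z) (y := w), ht₀mem.1]
  intro w hw hwd
  rcases lt_or_eq_of_le hwd with h | h
  · exact strict w hw h
  -- boundary case: approach along the segment
  have h1 : Filter.Tendsto (fun t : ℝ => z + t • (w - z)) (nhdsWithin 1 (Set.Iio 1)) (nhds w) := by
    have hc : Continuous fun t : ℝ => z + t • (w - z) := by fun_prop
    have h2 : Filter.Tendsto (fun t : ℝ => z + t • (w - z)) (nhdsWithin 1 (Set.Iio 1))
        (nhds (z + (1:ℝ) • (w - z))) := (hc.tendsto 1).mono_left nhdsWithin_le_nhds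
    have h3 : z + (1:ℝ) • (w - z) = w := by rw [one_smul]; abel
    rwa [h3] at h2
  have h2 : ∀ᶠ t in nhdsWithin 1 (Set.Iio (1:ℝ)), z + t • (w - z) ∈ X := by
    filter_upwards [Ioo_mem_nhdsLT_of_mem (Set.mem_Ioc.mpr ⟨zero_lt_one, le_refl (1:ℝ)⟩)]
      with t ht
    apply strict _ (hseg w hw t)
    rw [hdseg w t ht.1.le]
    calc t * dist z w ≤ t * ρ := by
          apply mul_le_mul_of_nonneg_left _ ht.1.le
          rw [h]
      _ < ρ := by nlinarith [ht.2]
  exact hXcl.mem_of_tendsto h1 h2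
/-- Transfer of a deep ball across Hausdorff distance, with averaging of the centers. -/
lemma ball_in_Y {T : ℕ} (Y : Set (Vec T)) (hYconv : Convex ℝ Y) (hYcl : IsClosed Y)
    (hYcomp : IsCompact Y) (hYne : Y.Nonempty)
    {γ : Type*} (s : Finset γ) (hs : s.Nonempty)
    (Xc : γ → Set (Vec T)) (zc : γ → Vec T) (D ρ : ℝ) (hD : 0 ≤ D) (hDρ : D ≤ ρ)
    (hmemb : ∀ n ∈ s, zc n ∈ Xc n)
    (hbdd : ∀ n ∈ s, Bornology.IsBounded (Xc n))
    (hXne : ∀ n ∈ s, (Xc n).Nonempty)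
    (hspan : ∀ n ∈ s, affineSpan ℝ (Xc n) = affineSpan ℝ Y)
    (hhaus : ∀ n ∈ s, Metric.hausdorffDist (Xc n) Y ≤ D)
    (hball : ∀ n ∈ s, ∀ w ∈ affineSpan ℝ (Xc n), dist (zc n) w ≤ ρ → w ∈ Xc n) :
    ∀ w ∈ affineSpan ℝ Y, dist (((s.card : ℝ)⁻¹) • ∑ n ∈ s, zc n) w ≤ ρ - D → w ∈ Y := by
  intro w hw hwd
  by_contra hwY
  set zbar : Vec T := ((s.card : ℝ)⁻¹) • ∑ n ∈ s, zc n with hzbar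
  have hcard : (0 : ℝ) < s.card := by exact_mod_cast Finset.card_pos.mpr hs
  have hzbarspan : zbar ∈ affineSpan ℝ Y := by
    apply avg_mem_affineSpan _ s hs
    intro n hn
    have : zc n ∈ affineSpan ℝ (Xc n) := subset_affineSpan ℝ _ (hmemb n hn)
    rwa [hspan n hn] at this
  obtain ⟨f, u, hfY, hfw⟩ := geometric_hahn_banach_closed_point hYconv hYcl hwY
  set v : Vec T := (InnerProductSpace.toDual ℝ (Vec T)).symm f with hv
  set U := (affineSpan ℝ Y).direction with hU
  set ν : Vec T := (U.orthogonalProjectionOnto v : Vec T) with hν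
  have hνU : ν ∈ U := SetLike.coe_mem _
  have hkey : ∀ a b : Vec T, a ∈ affineSpan ℝ Y → b ∈ affineSpan ℝ Y →
      f a - f b = ⟪ν, a - b⟫ := by
    intro a b ha hb
    have h1 : f a - f b = ⟪v, a - b⟫ := by
      rw [hv, ← map_sub]
      exact (InnerProductSpace.toDual_symm_apply).symm
    have h2 : a - b ∈ U := AffineSubspace.vsub_mem_direction ha hb
    have h3 : v - ν ∈ Uᗮ := U.sub_starProjection_mem_orthogonal v
    have h4 : ⟪a - b, v - ν⟫ = 0 := (Submodule.mem_orthogonal U (v - ν)).mp h3 _ h2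
    rw [real_inner_comm] at h4
    have h5 : ⟪v, a - b⟫ = ⟪ν, a - b⟫ + ⟪v - ν, a - b⟫ := by
      rw [← inner_add_left]
      congr 1
      abel
    rw [h1, h5, h4, add_zero]
  rcases eq_or_ne ν 0 with hν0 | hν0
  · obtain ⟨a₀, ha₀⟩ := hYne
    have h1 := hkey w a₀ hw (subset_affineSpan ℝ Y ha₀)
    rw [hν0, inner_zero_left] at h1
    have := hfY a₀ ha₀
    linarith [hfw]
  · set nuh : Vec T := ‖ν‖⁻¹ • ν with hnuh
    have hnuhU : nuh ∈ U := Submodule.smul_mem _ _ hνU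
    have hnuhnorm : ‖nuh‖ = 1 := norm_smul_inv_norm hν0
    have hνnorm : 0 < ‖ν‖ := norm_pos_iff.mpr hν0
    have hstep : ∀ n ∈ s, f (zc n) + (ρ - D) * ‖ν‖ < u := by
      intro n hn
      set p : Vec T := zc n + ρ • nuh with hp
      have hdir_eq : (affineSpan ℝ (Xc n)).direction = U := by rw [hspan n hn]
      have hzspanX : zc n ∈ affineSpan ℝ (Xc n) := subset_affineSpan ℝ _ (hmemb n hn)
      have hpspan : p ∈ affineSpan ℝ (Xc n) := by
        have hdir : ρ • nuh ∈ (affineSpan ℝ (Xc n)).direction := by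
          rw [hdir_eq]
          exact Submodule.smul_mem _ _ hnuhU
        have := AffineSubspace.vadd_mem_of_mem_direction hdir hzspanX
        simpa [vadd_eq_add, add_comm] using this
      have hpX : p ∈ Xc n := by
        apply hball n hn p hpspan
        rw [dist_eq_norm, hp]
        have h0 : zc n - (zc n + ρ • nuh) = -(ρ • nuh) := by abel
        rw [h0, norm_neg, norm_smul, Real.norm_eq_abs, abs_of_nonneg (le_trans hD hDρ),
          hnuhnorm, mul_one]
      obtain ⟨q, hqY, hqd⟩ := exists_close_of_hausdorff (Xc n) Y (hXne n hn) hYne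
        (hbdd n hn) hYcomp.isBounded hYcl p hpX D (hhaus n hn)
      have hqspan : q ∈ affineSpan ℝ Y := subset_affineSpan ℝ Y hqY
      have hpspanY : p ∈ affineSpan ℝ Y := by rw [← hspan n hn]; exact hpspan
      -- f q ≥ f p - ‖ν‖ D
      have h1 : f q - f p = ⟪ν, q - p⟫ := hkey q p hqspan hpspanY
      have h2 : -(‖ν‖ * D) ≤ ⟪ν, q - p⟫ := by
        have := abs_real_inner_le_norm ν (q - p)
        have hqp : ‖q - p‖ ≤ D := by
          rw [← dist_eq_norm, dist_comm]
          exact hqd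
        have : |⟪ν, q - p⟫| ≤ ‖ν‖ * D :=
          le_trans this (mul_le_mul_of_nonneg_left hqp (norm_nonneg ν))
        linarith [neg_abs_le ⟪ν, q - p⟫]
      -- f p = f (zc n) + ρ ‖ν‖
      have h3 : f p - f (zc n) = ρ * ‖ν‖ := by
        have := hkey p (zc n) hpspanY (by rw [← hspan n hn]; exact hzspanX)
        rw [this, hp]
        have h0 : zc n + ρ • nuh - zc n = ρ • nuh := by abel
        rw [h0, hnuh, smul_smul, real_inner_smul_right, real_inner_self_eq_norm_sq]
        field_simp
      have h4 := hfY q hqY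
      nlinarith [h1, h2, h3, h4]
    -- average over n ∈ s
    have hsum : ∑ n ∈ s, (f (zc n) + (ρ - D) * ‖ν‖) < ∑ _n ∈ s, u :=
      Finset.sum_lt_sum_of_nonempty hs hstep
    have hfzbar : f zbar = (s.card : ℝ)⁻¹ * ∑ n ∈ s, f (zc n) := by
      rw [hzbar, map_smul, map_sum]
      rfl
    have havg : f zbar + (ρ - D) * ‖ν‖ < u := by
      rw [Finset.sum_add_distrib, Finset.sum_const, Finset.sum_const, nsmul_eq_mul,
        nsmul_eq_mul] at hsum
      have hlt : (s.card : ℝ) * (f zbar + (ρ - D) * ‖ν‖) < (s.card : ℝ) * u := by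
        rw [mul_add, hfzbar, ← mul_assoc, mul_inv_cancel₀ (ne_of_gt hcard), one_mul]
        linarith
      exact lt_of_mul_lt_mul_left hlt hcard.le
    -- yet f w is close to f zbar
    have hfinal : f w - f zbar ≤ (ρ - D) * ‖ν‖ := by
      rw [hkey w zbar hw hzbarspan]
      calc ⟪ν, w - zbar⟫ ≤ ‖ν‖ * ‖w - zbar‖ := real_inner_le_norm _ _
        _ ≤ ‖ν‖ * (ρ - D) := by
            apply mul_le_mul_of_nonneg_left _ (norm_nonneg ν)
            rw [← dist_eq_norm, dist_comm]
            exact hwd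
        _ = (ρ - D) * ‖ν‖ := by ring
    linarith [hfw]

lemma slice1_convex {T : ℕ} (F : Vec T × Vec T → ℝ) (hF : ConvexOn ℝ Set.univ F)
    (v : Vec T) : ConvexOn ℝ Set.univ (fun u => F (u, v)) := by
  constructor
  · exact convex_univ
  · intro u _ u' _ a b ha hb hab
    have hv : a • v + b • v = v := by rw [← add_smul, hab, one_smul]
    have h2 := hF.2 (Set.mem_univ (u, v)) (Set.mem_univ (u', v)) ha hb hab
    have h3 : a • ((u, v) : Vec T × Vec T) + b • (u', v) = (a • u + b • u', v) := by
      rw [Prod.smul_mk, Prod.smul_mk, Prod.mk_add_mk, hv]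
    rw [h3] at h2
    simpa using h2

lemma sum_fiber {N : ℕ} {I : Type*} [Fintype I] [DecidableEq I] (cl : Fin N → I)
    {M : Type*} [AddCommMonoid M] (v : Fin N → M) :
    ∑ i : I, ∑ n ∈ Finset.univ.filter (fun n => cl n = i), v n = ∑ n, v n := by
  rw [Finset.sum_fiberwise_eq_sum_filter]
  simp

set_option maxHeartbeats 2000000 in
/-- the SVWE of the auxiliary population game is close to a VNE of the
original atomic game, under strong monotonicity. -/
theorem aux_svwe_close_to_vne (N T : ℕ) (hN : 0 < N) (hT : 0 < T) (R : ℝ) (hR : 0 < R)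
    (f : Fin N → Vec T → Vec T → ℝ)
    (hjconv : ∀ n, ConvexOn ℝ Set.univ (fun p : Vec T × Vec T => f n p.1 p.2))
    (L₂ : ℝ) (hL₂ : 0 < L₂)
    (hLip₂ : ∀ n u v w, |f n u v - f n u w| ≤ L₂ * ‖v - w‖)
    (Xset : Fin N → Set (Vec T))
    (hXne : ∀ n, (Xset n).Nonempty) (hXconv : ∀ n, Convex ℝ (Xset n))
    (hXcomp : ∀ n, IsCompact (Xset n)) (hXbd : ∀ n, ∀ x ∈ Xset n, ‖x‖ ≤ R)
    (A : Set (Vec T)) (hAne : A.Nonempty) (hAcl : IsClosed A) (hAconv : Convex ℝ A)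
    (I : Type) [Fintype I] [DecidableEq I] (cl : Fin N → I) (hcl : Function.Surjective cl)
    (Yset : I → Set (Vec T))
    (hYne : ∀ i, (Yset i).Nonempty) (hYconv : ∀ i, Convex ℝ (Yset i))
    (hYcomp : ∀ i, IsCompact (Yset i)) (hYbd : ∀ i, ∀ y ∈ Yset i, ‖y‖ ≤ R)
    (F : I → Vec T → Vec T → ℝ)
    (hFconv : ∀ i v, ConvexOn ℝ Set.univ (fun u => F i u v))
    (D Df : ℝ)
    (hspan : ∀ n, affineSpan ℝ (Xset n) = affineSpan ℝ (Yset (cl n)))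
    (hhaus : ∀ n, Metric.hausdorffDist (Xset n) (Yset (cl n)) ≤ D)
    (hsubgrad : ∀ n, ∀ u ∈ Yset (cl n), ∀ v : Vec T, ‖v‖ ≤ R →
      Metric.hausdorffDist (subdiff (fun y => F (cl n) y v) u)
        (subdiff (fun y => f n y v) u) ≤ Df)
    (ρ : ℝ) (hρ : 0 < ρ) (z : Profile N T) (hz : z ∈ XA Xset A)
    (hzint : ∀ n, ∀ w ∈ intrinsicFrontier ℝ (Xset n), ρ ≤ dist (z n) w)
    (hDρ : D < ρ / 2)
    (L₁ : ℝ) (hL₁ : 0 < L₁)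
    (hfLip : ∀ n (v : Vec T), ‖v‖ ≤ R → ∀ u u', |f n u v - f n u' v| ≤ L₁ * ‖u - u'‖)
    (hFbound : ∀ i, ∀ u ∈ Yset i, ∀ v : Vec T, ‖v‖ ≤ R →
      ∀ h ∈ subdiff (fun y => F i y v) u, ‖h‖ ≤ L₁)
    (α : ℝ) (hα : 0 < α)
    (hmono : ∀ x y : Profile N T, (∀ n, ‖x n‖ ≤ R) → (∀ n, ‖y n‖ ≤ R) →
      ∀ g ∈ Phi f x, ∀ h ∈ Phi f y, α * ‖x - y‖ ^ 2 ≤ ⟪g - h, x - y⟫)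
    (xI : I → Vec T) (hxI : xI ∈ XIA cl Yset A)
    (hI : I → Vec T)
    (hhI : ∀ i, hI i ∈ subdiff (fun u => F i u (avgI cl xI)) (xI i))
    (hSVWEI : ∀ y ∈ XIA cl Yset A, 0 ≤ ∑ i, (clCard cl i : ℝ) * ⟪hI i, y i - xI i⟫)
    (xhat : Profile N T) (hxhat : xhat ∈ XA Xset A)
    (ghat : Profile N T) (hghat : ghat ∈ PhiHat f xhat)
    (hVNE : ∀ x ∈ XA Xset A, 0 ≤ ⟪ghat, x - xhat⟫)
    (K : ℝ) (hK : K = 2 * R * (3 * L₁ * D / ρ + Df)) :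
    ‖psiMap cl xI - xhat‖ ≤ L₂ / (α * Real.sqrt N) + Real.sqrt ((N : ℝ) * K / α) ∧
      ‖avgI cl xI - avg xhat‖ ≤ L₂ / (α * N) + Real.sqrt (K / α) := by
  -- set-up
  set x : Profile N T := psiMap cl xI with hxdef
  have hNR : (0:ℝ) < N := by exact_mod_cast hN
  have hn₀ : Fin N := ⟨0, hN⟩
  have hDnn : 0 ≤ D := le_trans Metric.hausdorffDist_nonneg (hhaus hn₀)
  have hDltρ : D < ρ := by linarith
  set lam : ℝ := D / ρ with hlam
  have hlam0 : 0 ≤ lam := div_nonneg hDnn hρ.le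
  have hlam1 : lam ≤ 1 := by
    rw [hlam, div_le_one hρ]; linarith
  -- fibers
  set fib : I → Finset (Fin N) := fun i => Finset.univ.filter (fun n => cl n = i) with hfib
  have hfibne : ∀ i, (fib i).Nonempty := by
    intro i
    obtain ⟨n, hn⟩ := hcl i
    exact ⟨n, Finset.mem_filter.mpr ⟨Finset.mem_univ n, hn⟩⟩
  have hfibcl : ∀ i, ∀ n ∈ fib i, cl n = i := by
    intro i n hn
    exact (Finset.mem_filter.mp hn).2
  have hcardpos : ∀ i, (0:ℝ) < (fib i).card := by
    intro i
    exact_mod_cast Finset.card_pos.mpr (hfibne i)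
  have hcardsum : ∑ i, ((fib i).card : ℝ) = (N : ℝ) := by
    have h := Finset.card_eq_sum_card_fiberwise
      (fun (x : Fin N) (_ : x ∈ Finset.univ) => Finset.mem_univ (cl x))
    have h2 : (Finset.univ : Finset (Fin N)).card = N := by simp
    rw [h2] at h
    exact_mod_cast (congrArg (Nat.cast : ℕ → ℝ) h).symm
  -- memberships and norm bounds
  have hxY : ∀ n, x n ∈ Yset (cl n) := fun n => hxI.1 (cl n)
  have hxR : ∀ n, ‖x n‖ ≤ R := fun n => hYbd (cl n) _ (hxY n)
  have hxhatX : ∀ n, xhat n ∈ Xset n := hxhat.1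
  have hxhatR : ∀ n, ‖xhat n‖ ≤ R := fun n => hXbd n _ (hxhatX n)
  have hzX : ∀ n, z n ∈ Xset n := hz.1
  have hzR : ∀ n, ‖z n‖ ≤ R := fun n => hXbd n _ (hzX n)
  have hDelta : ∀ n, ‖x n - xhat n‖ ≤ 2 * R := by
    intro n
    calc ‖x n - xhat n‖ ≤ ‖x n‖ + ‖xhat n‖ := norm_sub_le _ _
      _ ≤ 2 * R := by linarith [hxR n, hxhatR n]
  -- grouping identities
  have hgroup : ∀ (w : Fin N → Vec T),
      ∑ i, ∑ n ∈ fib i, w n = ∑ n, w n := fun w => sum_fiber cl w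
  have havgid : avg x = avgI cl xI := by
    rw [avg, avgI]
    congr 1
    rw [← hgroup (fun n => x n)]
    apply Finset.sum_congr rfl
    intro i _
    have : ∑ n ∈ fib i, x n = ∑ _n ∈ fib i, xI i := by
      apply Finset.sum_congr rfl
      intro n hn
      show xI (cl n) = xI i
      rw [hfibcl i n hn]
    rw [this, Finset.sum_const, ← Nat.cast_smul_eq_nsmul ℝ]
    rfl
  have havgIR : ‖avgI cl xI‖ ≤ R := by
    rw [← havgid, avg]
    have : (1 / (N:ℝ)) = ((Finset.univ : Finset (Fin N)).card : ℝ)⁻¹ := by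
      simp [one_div]
    rw [this]
    exact avg_norm_le _ ⟨hn₀, Finset.mem_univ _⟩ _ R (fun n _ => hxR n)
  have havgxhatR : ‖avg xhat‖ ≤ R := by
    rw [avg]
    have : (1 / (N:ℝ)) = ((Finset.univ : Finset (Fin N)).card : ℝ)⁻¹ := by
      simp [one_div]
    rw [this]
    exact avg_norm_le _ ⟨hn₀, Finset.mem_univ _⟩ _ R (fun n _ => hxhatR n)
  have havgz : avg z ∈ A := hz.2
  have havgxA : avgI cl xI ∈ A := hxI.2
  have havgxhatA : avg xhat ∈ A := hxhat.2
  -- identities for the modified cost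
  have havgOther : ∀ (w : Profile N T) (n : Fin N),
      avgOther w n + (1 / (N:ℝ)) • w n = avg w := by
    intro w n
    rw [avgOther, avg, ← smul_add, Finset.sum_erase_add _ _ (Finset.mem_univ n)]
  have hid2 : ∀ (y : Vec T) (n : Fin N),
      avgOther xhat n + (1 / (N:ℝ)) • y = avg xhat + (1 / (N:ℝ)) • (y - xhat n) := by
    intro y n
    rw [← havgOther xhat n, smul_sub]
    abel
  have hsmallnorm : ∀ (y : Vec T) (n : Fin N),
      ‖(1 / (N:ℝ)) • (y - xhat n)‖ = 1 / (N:ℝ) * ‖y - xhat n‖ := by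
    intro y n
    rw [norm_smul, Real.norm_eq_abs, abs_of_pos (by positivity)]
  -- construction of the true subgradients h n at xhat, close to ghat n
  have hhex : ∀ n, ∃ hn ∈ subdiff (fun y => f n y (avg xhat)) (xhat n),
      ‖hn - ghat n‖ ≤ L₂ / N := by
    intro n
    refine exists_subdiff_close (fun y => f n y (avg xhat)) (slice1_convex _ (hjconv n) _)
      (xhat n) (ghat n) (L₂ / N) (by positivity) ?_
    intro y
    have h1 : f n (xhat n) (avgOther xhat n + (1 / (N:ℝ)) • xhat n) + ⟪ghat n, y - xhat n⟫
        ≤ f n y (avgOther xhat n + (1 / (N:ℝ)) • y) := hghat n y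
    rw [havgOther xhat n] at h1
    have h2 := hLip₂ n y (avgOther xhat n + (1 / (N:ℝ)) • y) (avg xhat)
    have h3 : avgOther xhat n + (1 / (N:ℝ)) • y - avg xhat = (1 / (N:ℝ)) • (y - xhat n) := by
      rw [hid2 y n]; abel
    rw [h3, hsmallnorm] at h2
    have h4 : L₂ * (1 / (N:ℝ) * ‖y - xhat n‖) = L₂ / N * ‖y - xhat n‖ := by ring
    rw [h4] at h2
    have h5 := abs_le.mp h2
    show f n (xhat n) (avg xhat) + ⟪ghat n, y - xhat n⟫ - L₂ / ↑N * ‖y - xhat n‖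
        ≤ f n y (avg xhat)
    linarith [h5.1, h5.2, h1]
  choose hvec hmem hclose using hhex
  have hhnorm : ∀ n, ‖hvec n‖ ≤ L₁ := by
    intro n
    apply subdiff_norm_le _ _ L₁ hL₁.le _ _ (hmem n)
    intro y
    exact le_trans (le_abs_self _) (hfLip n (avg xhat) havgxhatR y (xhat n))
  -- norm bound for ghat
  have hghatnorm : ∀ n, ‖ghat n‖ ≤ L₁ + L₂ / N := by
    intro n
    apply subdiff_norm_le _ _ _ (by positivity) _ _ (hghat n)
    intro y
    show f n y (avgOther xhat n + (1 / (N:ℝ)) • y)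
        - f n (xhat n) (avgOther xhat n + (1 / (N:ℝ)) • xhat n) ≤ (L₁ + L₂ / ↑N) * ‖y - xhat n‖
    have h2 := hLip₂ n y (avgOther xhat n + (1 / (N:ℝ)) • y) (avg xhat)
    have h3 : avgOther xhat n + (1 / (N:ℝ)) • y - avg xhat = (1 / (N:ℝ)) • (y - xhat n) := by
      rw [hid2 y n]; abel
    rw [h3, hsmallnorm] at h2
    have h4 : L₂ * (1 / (N:ℝ) * ‖y - xhat n‖) = L₂ / N * ‖y - xhat n‖ := by ring
    rw [h4] at h2
    have h5 := abs_le.mp h2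
    have h6 := le_trans (le_abs_self _) (hfLip n (avg xhat) havgxhatR y (xhat n))
    rw [havgOther xhat n]
    nlinarith [h5.1, h5.2, h6]
  -- construction of the subgradients g n at x, close to hI (cl n)
  have hgex : ∀ n, ∃ gn ∈ subdiff (fun y => f n y (avgI cl xI)) (x n),
      dist (hI (cl n)) gn ≤ Df := by
    intro n
    set Sf := subdiff (fun y => f n y (avgI cl xI)) (x n) with hSf
    set SF := subdiff (fun y => F (cl n) y (avgI cl xI)) (xI (cl n)) with hSF
    have hSfne : Sf.Nonempty := by
      have hcond : ∀ y, (fun y => f n y (avgI cl xI)) (x n) + ⟪(0 : Vec T), y - x n⟫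
          - L₁ * ‖y - x n‖ ≤ (fun y => f n y (avgI cl xI)) y := by
        intro y
        rw [inner_zero_left]
        have := le_trans (le_abs_self _) (hfLip n (avgI cl xI) havgIR (x n) y)
        rw [norm_sub_rev] at this
        simp only []
        linarith
      obtain ⟨gn, hgn, _⟩ := exists_subdiff_close (fun y => f n y (avgI cl xI))
        (slice1_convex _ (hjconv n) _) (x n) 0 L₁ hL₁.le hcond
      exact ⟨gn, hgn⟩
    have hSfbd : Bornology.IsBounded Sf := by
      apply (Metric.isBounded_closedBall (x := (0 : Vec T)) (r := L₁)).subset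
      intro g hg
      rw [Metric.mem_closedBall, dist_zero_right]
      apply subdiff_norm_le _ _ L₁ hL₁.le _ _ hg
      intro y
      exact le_trans (le_abs_self _) (hfLip n (avgI cl xI) havgIR y (x n))
    have hSFne : SF.Nonempty := ⟨hI (cl n), hhI (cl n)⟩
    have hSFbd : Bornology.IsBounded SF := by
      apply (Metric.isBounded_closedBall (x := (0 : Vec T)) (r := L₁)).subset
      intro g hg
      rw [Metric.mem_closedBall, dist_zero_right]
      exact hFbound (cl n) _ (hxI.1 (cl n)) _ havgIR g hg
    have hedist : EMetric.hausdorffEdist SF Sf ≠ ⊤ :=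
      Metric.hausdorffEdist_ne_top_of_nonempty_of_bounded hSFne hSfne hSFbd hSfbd
    have hinf : Metric.infDist (hI (cl n)) Sf ≤ Df := by
      refine le_trans (Metric.infDist_le_hausdorffDist_of_mem (hhI (cl n)) hedist) ?_
      exact hsubgrad n (xI (cl n)) (hxI.1 (cl n)) (avgI cl xI) havgIR
    obtain ⟨gn, hgn, hgnd⟩ := (subdiff_isClosed _ _).exists_infDist_eq_dist hSfne (hI (cl n))
    exact ⟨gn, hgn, by rw [← hgnd]; exact hinf⟩
  choose gvec gmem gclose using hgex
  have hDfnn : 0 ≤ Df := le_trans dist_nonneg (gclose hn₀)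
  have hgnorm : ∀ i, ‖hI i‖ ≤ L₁ :=
    fun i => hFbound i _ (hxI.1 i) _ havgIR _ (hhI i)
  -- deep-ball property of z in each Xset n
  have hzball : ∀ n, ∀ w ∈ affineSpan ℝ (Xset n), dist (z n) w ≤ ρ → w ∈ Xset n :=
    fun n => deep_ball_subset (Xset n) (hXcomp n).isClosed (z n) (hzX n) ρ hρ (hzint n)
  -- the shifted profile xlam ∈ X(A)
  set xlam : Profile N T := WithLp.toLp 2 (fun n => (1 - lam) • x n + lam • z n) with hxlam
  have hxlamX : ∀ n, xlam n ∈ Xset n := by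
    intro n
    obtain ⟨p, hpX, hpd⟩ := exists_close_of_hausdorff (Yset (cl n)) (Xset n)
      (hYne (cl n)) (hXne n) (hYcomp (cl n)).isBounded (hXcomp n).isBounded
      (hXcomp n).isClosed (x n) (hxY n) D
      (by rw [Metric.hausdorffDist_comm]; exact hhaus n)
    apply combo_mem (Xset n) (hXconv n) (z n) (subset_affineSpan ℝ _ (hzX n)) ρ D lam
      hlam0 hlam1 hDnn (x n) p ?_ hpX (by rw [← dist_eq_norm]; exact hpd) (hzball n) ?_
    · rw [hspan n]
      exact subset_affineSpan ℝ _ (hxY n)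
    · rw [hlam]
      have h1 : D / ρ * ρ = D := by field_simp
      rw [h1]
      nlinarith [mul_nonneg (div_nonneg hDnn hρ.le) hDnn]
  have hxlamA : xlam ∈ XA Xset A := by
    refine ⟨hxlamX, ?_⟩
    have : avg xlam = (1 - lam) • avg x + lam • avg z := by
      rw [avg, avg, avg]
      have h0 : ∑ n, xlam n = (1 - lam) • ∑ n, x n + lam • ∑ n, z n := by
        rw [Finset.smul_sum, Finset.smul_sum, ← Finset.sum_add_distrib]
      rw [h0, smul_add, smul_comm (1/(N:ℝ)) (1 - lam), smul_comm (1/(N:ℝ)) lam]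
    rw [this, havgid]
    exact hAconv havgxA havgz (by linarith) hlam0 (by ring)
  have hVNElam := hVNE xlam hxlamA
  -- the population comparison point y'
  set ybar : I → Vec T := fun i => (((fib i).card : ℝ))⁻¹ • ∑ n ∈ fib i, xhat n with hybar
  set zbar : I → Vec T := fun i => (((fib i).card : ℝ))⁻¹ • ∑ n ∈ fib i, z n with hzbar
  set y' : I → Vec T := fun i => (1 - lam) • ybar i + lam • zbar i with hy'
  have hybarspan : ∀ i, ybar i ∈ affineSpan ℝ (Yset i) := by
    intro i
    apply avg_mem_affineSpan _ _ (hfibne i)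
    intro n hn
    have h1 : xhat n ∈ affineSpan ℝ (Xset n) := subset_affineSpan ℝ _ (hxhatX n)
    rwa [hspan n, hfibcl i n hn] at h1
  have hzbarspan : ∀ i, zbar i ∈ affineSpan ℝ (Yset i) := by
    intro i
    apply avg_mem_affineSpan _ _ (hfibne i)
    intro n hn
    have h1 : z n ∈ affineSpan ℝ (Xset n) := subset_affineSpan ℝ _ (hzX n)
    rwa [hspan n, hfibcl i n hn] at h1
  have hybarR : ∀ i, ‖ybar i‖ ≤ R := fun i =>
    avg_norm_le _ (hfibne i) _ R (fun n _ => hxhatR n)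
  have hzbarR : ∀ i, ‖zbar i‖ ≤ R := fun i =>
    avg_norm_le _ (hfibne i) _ R (fun n _ => hzR n)
  have hYball : ∀ i, ∀ w ∈ affineSpan ℝ (Yset i), dist (zbar i) w ≤ ρ - D → w ∈ Yset i := by
    intro i
    apply ball_in_Y (Yset i) (hYconv i) (hYcomp i).isClosed (hYcomp i) (hYne i)
      (fib i) (hfibne i) Xset z D ρ hDnn hDltρ.le
      (fun n _ => hzX n) (fun n _ => (hXcomp n).isBounded) (fun n _ => hXne n)
      ?_ ?_ (fun n _ => hzball n)
    · intro n hn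
      rw [hspan n, hfibcl i n hn]
    · intro n hn
      have := hhaus n
      rwa [hfibcl i n hn] at this
  have hy'Y : ∀ i, y' i ∈ Yset i := by
    intro i
    -- find a point of Yset i close to ybar i
    have hq : ∀ n, n ∈ fib i → ∃ q ∈ Yset i, dist (xhat n) q ≤ D := by
      intro n hn
      have h := exists_close_of_hausdorff (Xset n) (Yset (cl n)) (hXne n) (hYne (cl n))
        (hXcomp n).isBounded (hYcomp (cl n)).isBounded (hYcomp (cl n)).isClosed
        (xhat n) (hxhatX n) D (hhaus n)
      rwa [hfibcl i n hn] at h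
    choose! q hqY hqd using hq
    set p : Vec T := (((fib i).card : ℝ))⁻¹ • ∑ n ∈ fib i, q n with hp
    have hpY : p ∈ Yset i := avg_mem_convex _ (hYconv i) _ (hfibne i) _ (fun n hn => hqY n hn)
    have hpd : ‖ybar i - p‖ ≤ D := by
      rw [hybar, hp]
      simp only []
      rw [← smul_sub, ← Finset.sum_sub_distrib]
      apply avg_norm_le _ (hfibne i) _ D
      intro n hn
      rw [← dist_eq_norm]
      exact hqd n hn
    apply combo_mem (Yset i) (hYconv i) (zbar i) ?_ (ρ - D) D lam hlam0 hlam1 hDnn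
      (ybar i) p (hybarspan i) hpY hpd (hYball i) ?_
    · have : Yset i ⊆ affineSpan ℝ (Yset i) := subset_affineSpan ℝ _
      exact hzbarspan i
    · rw [hlam]
      have h1 : D / ρ * (ρ - D) = D - D / ρ * D := by field_simp
      rw [h1]
      have h2 : (1 - D / ρ) * D = D - D / ρ * D := by ring
      rw [h2]
  have hy'A : avgI cl y' ∈ A := by
    have h2 : ∀ i, (clCard cl i : ℝ) • y' i
        = (1 - lam) • (∑ n ∈ fib i, xhat n) + lam • (∑ n ∈ fib i, z n) := by
      intro i
      show ((fib i).card : ℝ) • ((1 - lam) • (((fib i).card : ℝ))⁻¹ • (∑ n ∈ fib i, xhat n)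
          + lam • (((fib i).card : ℝ))⁻¹ • (∑ n ∈ fib i, z n)) = _
      rw [smul_add, smul_comm _ (1 - lam), smul_comm _ lam, smul_smul (((fib i).card : ℝ)),
        mul_inv_cancel₀ (ne_of_gt (hcardpos i)), one_smul, smul_smul (((fib i).card : ℝ)),
        mul_inv_cancel₀ (ne_of_gt (hcardpos i)), one_smul]
    have h1 : avgI cl y' = (1 - lam) • avg xhat + lam • avg z := by
      rw [avgI, avg, avg]
      rw [Finset.sum_congr rfl (fun i _ => h2 i), Finset.sum_add_distrib,
        ← Finset.smul_sum, ← Finset.smul_sum, hgroup (fun n => xhat n), hgroup (fun n => z n),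
        smul_add, smul_comm (1/(N:ℝ)) (1 - lam), smul_comm (1/(N:ℝ)) lam]
    rw [h1]
    exact hAconv havgxhatA havgz (by linarith) hlam0 (by ring)
  have hSVWE' := hSVWEI y' ⟨hy'Y, hy'A⟩
  -- monotonicity
  set gP : Profile N T := WithLp.toLp 2 gvec with hgPdef
  set hP : Profile N T := WithLp.toLp 2 hvec with hhPdef
  have hgPhi : gP ∈ Phi f x := by
    intro n
    show gvec n ∈ subdiff (fun y => f n y (avg x)) (x n)
    rw [havgid]
    exact gmem n
  have hhPhi : hP ∈ Phi f xhat := hmem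
  have hmain := hmono x xhat hxR hxhatR gP hgPhi hP hhPhi
  set d : ℝ := ‖x - xhat‖ with hddef
  have hdnn : 0 ≤ d := norm_nonneg _
  have hsumnorm : ∑ n, ‖x n - xhat n‖ ≤ Real.sqrt N * d := sum_norm_le_sqrt (x - xhat)
  -- splitting the inner product
  have hsplit : ⟪gP - hP, x - xhat⟫
      = (∑ n, ⟪gvec n, x n - xhat n⟫) + (∑ n, ⟪hvec n, xhat n - x n⟫) := by
    rw [PiLp.inner_apply, ← Finset.sum_add_distrib]
    apply Finset.sum_congr rfl
    intro n _
    have h1 : (gP - hP) n = gvec n - hvec n := rfl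
    have h2 : (x - xhat) n = x n - xhat n := rfl
    rw [h1, h2, inner_sub_left]
    have h3 : ⟪hvec n, xhat n - x n⟫ = - ⟪hvec n, x n - xhat n⟫ := by
      rw [← inner_neg_right, neg_sub]
    rw [h3]
    ring
  -- the SVWE side
  have hSg : (∑ n, ⟪gvec n, x n - xhat n⟫) ≤ 2*R*N*Df + 2*R*N*(lam*L₁) := by
    have hdecomp : ∀ n : Fin N, ⟪gvec n, x n - xhat n⟫
        = ⟪hI (cl n), x n - xhat n⟫ + ⟪gvec n - hI (cl n), x n - xhat n⟫ := by
      intro n; rw [inner_sub_left]; ring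
    rw [Finset.sum_congr rfl (fun n _ => hdecomp n), Finset.sum_add_distrib]
    have hB : ∑ n, ⟪gvec n - hI (cl n), x n - xhat n⟫ ≤ (N:ℝ) * (Df * (2*R)) := by
      calc ∑ n, ⟪gvec n - hI (cl n), x n - xhat n⟫
          ≤ ∑ (_n : Fin N), Df * (2*R) := by
            apply Finset.sum_le_sum
            intro n _
            calc ⟪gvec n - hI (cl n), x n - xhat n⟫
                ≤ ‖gvec n - hI (cl n)‖ * ‖x n - xhat n‖ := real_inner_le_norm _ _
              _ ≤ Df * (2*R) := by
                  apply mul_le_mul _ (hDelta n) (norm_nonneg _) hDfnn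
                  rw [← dist_eq_norm, dist_comm]
                  exact gclose n
        _ = (N:ℝ) * (Df * (2*R)) := by
            rw [Finset.sum_const, nsmul_eq_mul]; simp
    have hA : ∑ n, ⟪hI (cl n), x n - xhat n⟫ ≤ (N:ℝ) * (lam * (L₁ * (2*R))) := by
      have hregroup : ∑ n, ⟪hI (cl n), x n - xhat n⟫
          = ∑ i, ((fib i).card : ℝ) * ⟪hI i, xI i - ybar i⟫ := by
        rw [← sum_fiber cl (fun n => ⟪hI (cl n), x n - xhat n⟫)]
        apply Finset.sum_congr rfl
        intro i _
        have hc := hcardpos i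
        have h1 : ∑ n ∈ fib i, ⟪hI (cl n), x n - xhat n⟫
            = ∑ n ∈ fib i, ⟪hI i, xI i - xhat n⟫ := by
          apply Finset.sum_congr rfl
          intro n hn
          rw [show x n = xI (cl n) from rfl, hfibcl i n hn]
        rw [h1, ← inner_sum]
        have h2 : ∑ n ∈ fib i, (xI i - xhat n) = ((fib i).card : ℝ) • (xI i - ybar i) := by
          rw [smul_sub, Finset.sum_sub_distrib, Finset.sum_const]
          congr 1
          · rw [Nat.cast_smul_eq_nsmul]
          · show ∑ n ∈ fib i, xhat n
              = ((fib i).card:ℝ) • (((fib i).card:ℝ))⁻¹ • ∑ n ∈ fib i, xhat n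
            rw [smul_smul, mul_inv_cancel₀ (ne_of_gt hc), one_smul]
        rw [h2, real_inner_smul_right]
      rw [hregroup]
      have hdecomp2 : ∀ i, ((fib i).card : ℝ) * ⟪hI i, xI i - ybar i⟫
          = ((fib i).card : ℝ) * ⟪hI i, y' i - ybar i⟫
            - ((fib i).card : ℝ) * ⟪hI i, y' i - xI i⟫ := by
        intro i
        rw [← mul_sub, ← inner_sub_right]
        congr 2
        abel
      rw [Finset.sum_congr rfl (fun i _ => hdecomp2 i), Finset.sum_sub_distrib]
      have hS2 : (0:ℝ) ≤ ∑ i, ((fib i).card : ℝ) * ⟪hI i, y' i - xI i⟫ := hSVWE'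
      have hS1 : ∑ i, ((fib i).card : ℝ) * ⟪hI i, y' i - ybar i⟫
          ≤ ∑ i, ((fib i).card : ℝ) * (lam * (L₁ * (2*R))) := by
        apply Finset.sum_le_sum
        intro i _
        apply mul_le_mul_of_nonneg_left _ (hcardpos i).le
        have h3 : y' i - ybar i = lam • (zbar i - ybar i) := by
          show (1 - lam) • ybar i + lam • zbar i - ybar i = _
          rw [smul_sub, sub_smul, one_smul]; abel
        rw [h3, real_inner_smul_right]
        apply mul_le_mul_of_nonneg_left _ hlam0
        calc ⟪hI i, zbar i - ybar i⟫ ≤ ‖hI i‖ * ‖zbar i - ybar i‖ := real_inner_le_norm _ _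
          _ ≤ L₁ * (2*R) := by
              apply mul_le_mul (hgnorm i) _ (norm_nonneg _) hL₁.le
              calc ‖zbar i - ybar i‖ ≤ ‖zbar i‖ + ‖ybar i‖ := norm_sub_le _ _
                _ ≤ 2*R := by linarith [hzbarR i, hybarR i]
      have hsum2 : ∑ i, ((fib i).card : ℝ) * (lam * (L₁ * (2*R)))
          = (N:ℝ) * (lam * (L₁ * (2*R))) := by
        rw [← Finset.sum_mul, hcardsum]
      linarith [hS1, hS2]
    have he1 : (N:ℝ) * (Df * (2*R)) = 2*R*N*Df := by ring
    have he2 : (N:ℝ) * (lam * (L₁ * (2*R))) = 2*R*N*(lam*L₁) := by ring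
    linarith [hA, hB]
  -- the VNE side
  have hSh : (∑ n, ⟪hvec n, xhat n - x n⟫)
      ≤ (L₂/N) * (Real.sqrt N * d) + lam * (4*R*N*L₁) := by
    have hsecond : ∑ n, ⟪hvec n - ghat n, xhat n - x n⟫ ≤ (L₂/N) * (Real.sqrt N * d) := by
      calc ∑ n, ⟪hvec n - ghat n, xhat n - x n⟫ ≤ ∑ n, (L₂/N) * ‖x n - xhat n‖ := by
            apply Finset.sum_le_sum
            intro n _
            calc ⟪hvec n - ghat n, xhat n - x n⟫
                ≤ ‖hvec n - ghat n‖ * ‖xhat n - x n‖ := real_inner_le_norm _ _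
              _ ≤ (L₂/N) * ‖x n - xhat n‖ := by
                  rw [norm_sub_rev (xhat n)]
                  exact mul_le_mul_of_nonneg_right (hclose n) (norm_nonneg _)
        _ = (L₂/N) * ∑ n, ‖x n - xhat n‖ := by rw [Finset.mul_sum]
        _ ≤ (L₂/N) * (Real.sqrt N * d) :=
            mul_le_mul_of_nonneg_left hsumnorm (by positivity)
    rcases le_total L₂ ((N:ℝ) * L₁) with hcase | hcase
    · have hdecomp : ∀ n : Fin N, ⟪hvec n, xhat n - x n⟫
          = ⟪ghat n, xhat n - x n⟫ + ⟪hvec n - ghat n, xhat n - x n⟫ := by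
        intro n; rw [inner_sub_left]; ring
      rw [Finset.sum_congr rfl (fun n _ => hdecomp n), Finset.sum_add_distrib]
      have hfirst : ∑ n, ⟪ghat n, xhat n - x n⟫ ≤ lam * (4*R*N*L₁) := by
        have hdec2 : ∀ n : Fin N, ⟪ghat n, xhat n - x n⟫
            = ⟪ghat n, xhat n - xlam n⟫ + ⟪ghat n, xlam n - x n⟫ := by
          intro n; rw [← inner_add_right]; congr 1; abel
        rw [Finset.sum_congr rfl (fun n _ => hdec2 n), Finset.sum_add_distrib]
        have hvneterm : ∑ n, ⟪ghat n, xhat n - xlam n⟫ ≤ 0 := by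
          have h0 : ⟪ghat, xlam - xhat⟫ = ∑ n, ⟪ghat n, xlam n - xhat n⟫ := by
            rw [PiLp.inner_apply]
            rfl
          have h1 : ∑ n, ⟪ghat n, xhat n - xlam n⟫
              = - ∑ n, ⟪ghat n, xlam n - xhat n⟫ := by
            rw [← Finset.sum_neg_distrib]
            apply Finset.sum_congr rfl
            intro n _
            rw [← inner_neg_right, neg_sub]
          rw [h1, ← h0]
          linarith [hVNElam]
        have hshift : ∑ n, ⟪ghat n, xlam n - x n⟫
            ≤ (N:ℝ) * (lam * ((L₁ + L₂/N) * (2*R))) := by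
          calc ∑ n, ⟪ghat n, xlam n - x n⟫
              ≤ ∑ (_n : Fin N), lam * ((L₁ + L₂/N) * (2*R)) := by
                apply Finset.sum_le_sum
                intro n _
                have h2 : xlam n - x n = lam • (z n - x n) := by
                  show (1 - lam) • x n + lam • z n - x n = _
                  rw [smul_sub, sub_smul, one_smul]; abel
                rw [h2, real_inner_smul_right]
                apply mul_le_mul_of_nonneg_left _ hlam0
                calc ⟪ghat n, z n - x n⟫ ≤ ‖ghat n‖ * ‖z n - x n‖ := real_inner_le_norm _ _
                  _ ≤ (L₁ + L₂/N) * (2*R) := by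
                      apply mul_le_mul (hghatnorm n) _ (norm_nonneg _) (by positivity)
                      calc ‖z n - x n‖ ≤ ‖z n‖ + ‖x n‖ := norm_sub_le _ _
                        _ ≤ 2*R := by linarith [hzR n, hxR n]
            _ = (N:ℝ) * (lam * ((L₁ + L₂/N) * (2*R))) := by
                rw [Finset.sum_const, nsmul_eq_mul]; simp
        have harith : (N:ℝ) * (lam * ((L₁ + L₂/N) * (2*R))) ≤ lam * (4*R*N*L₁) := by
          have hL2N : L₂/N ≤ L₁ := by
            rw [div_le_iff₀ hNR]; nlinarith [hcase]
          have hstep : (N:ℝ) * (lam * ((L₁ + L₂/N) * (2*R)))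
              ≤ (N:ℝ) * (lam * ((L₁ + L₁) * (2*R))) := by
            apply mul_le_mul_of_nonneg_left _ hNR.le
            apply mul_le_mul_of_nonneg_left _ hlam0
            apply mul_le_mul_of_nonneg_right _ (by linarith)
            linarith
          calc (N:ℝ) * (lam * ((L₁ + L₂/N) * (2*R)))
              ≤ (N:ℝ) * (lam * ((L₁ + L₁) * (2*R))) := hstep
            _ = lam * (4*R*N*L₁) := by ring
        linarith [hvneterm, hshift]
      linarith [hfirst, hsecond]
    · have h1 : ∑ n, ⟪hvec n, xhat n - x n⟫ ≤ L₁ * ∑ n, ‖x n - xhat n‖ := by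
        rw [Finset.mul_sum]
        apply Finset.sum_le_sum
        intro n _
        calc ⟪hvec n, xhat n - x n⟫ ≤ ‖hvec n‖ * ‖xhat n - x n‖ := real_inner_le_norm _ _
          _ ≤ L₁ * ‖x n - xhat n‖ := by
              rw [norm_sub_rev (xhat n)]
              exact mul_le_mul_of_nonneg_right (hhnorm n) (norm_nonneg _)
      have h2 : L₁ * ∑ n, ‖x n - xhat n‖ ≤ L₁ * (Real.sqrt N * d) :=
        mul_le_mul_of_nonneg_left hsumnorm hL₁.le
      have h3 : L₁ * (Real.sqrt N * d) ≤ (L₂/N) * (Real.sqrt N * d) := by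
        apply mul_le_mul_of_nonneg_right _ (by positivity)
        rw [le_div_iff₀ hNR]; nlinarith [hcase]
      have h4 : 0 ≤ lam * (4*R*N*L₁) := mul_nonneg hlam0 (by positivity)
      linarith
  -- assembling the quadratic inequality
  have hKnn : 0 ≤ K := by
    rw [hK]
    have h1 : 0 ≤ 3 * L₁ * D / ρ := div_nonneg (mul_nonneg (by positivity) hDnn) hρ.le
    nlinarith [hDfnn, hR]
  have hsqrtN : (0:ℝ) < Real.sqrt N := Real.sqrt_pos.mpr hNR
  have hNsq : Real.sqrt N * Real.sqrt N = (N:ℝ) := Real.mul_self_sqrt hNR.le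
  have hfrac : (L₂/N) * Real.sqrt N = L₂ / Real.sqrt N := by
    rw [eq_div_iff (ne_of_gt hsqrtN), div_mul_eq_mul_div, div_mul_eq_mul_div,
      mul_assoc, hNsq]
    field_simp
  have harith2 : 2*R*N*Df + 2*R*N*(lam*L₁) + lam*(4*R*N*L₁) = (N:ℝ)*K := by
    rw [hK, hlam]
    field_simp
    ring
  have hquad : α * d^2 ≤ (L₂ / Real.sqrt N) * d + (N:ℝ)*K := by
    have hcomb : α * d^2 ≤ (2*R*N*Df + 2*R*N*(lam*L₁))
        + ((L₂/N) * (Real.sqrt N * d) + lam*(4*R*N*L₁)) := by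
      calc α * d^2 ≤ ⟪gP - hP, x - xhat⟫ := hmain
        _ = (∑ n, ⟪gvec n, x n - xhat n⟫) + (∑ n, ⟪hvec n, xhat n - x n⟫) := hsplit
        _ ≤ _ := add_le_add hSg hSh
    have heq : (L₂/N) * (Real.sqrt N * d) = (L₂ / Real.sqrt N) * d := by
      rw [← mul_assoc, hfrac]
    linarith [hcomb]
  have hd1 : d ≤ (L₂ / Real.sqrt N) / α + Real.sqrt ((N:ℝ)*K/α) :=
    quad_bound α _ _ d hα hdnn (by positivity) (mul_nonneg hNR.le hKnn) hquad
  have heqb : (L₂ / Real.sqrt N) / α = L₂ / (α * Real.sqrt N) := by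
    rw [div_div, mul_comm]
  rw [heqb] at hd1
  constructor
  · exact hd1
  · have havgdiff : ‖avgI cl xI - avg xhat‖ ≤ (1/(N:ℝ)) * ∑ n, ‖x n - xhat n‖ := by
      rw [← havgid, avg, avg, ← smul_sub, ← Finset.sum_sub_distrib]
      rw [norm_smul, Real.norm_eq_abs, abs_of_pos (by positivity)]
      apply mul_le_mul_of_nonneg_left _ (by positivity)
      exact norm_sum_le _ _
    have hchain : ‖avgI cl xI - avg xhat‖ ≤ d / Real.sqrt N := by
      calc ‖avgI cl xI - avg xhat‖ ≤ (1/(N:ℝ)) * ∑ n, ‖x n - xhat n‖ := havgdiff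
        _ ≤ (1/(N:ℝ)) * (Real.sqrt N * d) := mul_le_mul_of_nonneg_left hsumnorm (by positivity)
        _ = d / Real.sqrt N := by
            rw [eq_div_iff (ne_of_gt hsqrtN)]
            field_simp
            linear_combination d * hNsq
    have h2 : (L₂ / (α * Real.sqrt N)) / Real.sqrt N = L₂ / (α * N) := by
      rw [div_div, mul_assoc, hNsq]
    have h3 : Real.sqrt ((N:ℝ)*K/α) / Real.sqrt N = Real.sqrt (K/α) := by
      rw [show (N:ℝ)*K/α = (N:ℝ)*(K/α) from by ring, Real.sqrt_mul (Nat.cast_nonneg N)]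
      rw [mul_comm, mul_div_assoc, div_self (ne_of_gt hsqrtN), mul_one]
    calc ‖avgI cl xI - avg xhat‖ ≤ d / Real.sqrt N := hchain
      _ ≤ (L₂ / (α * Real.sqrt N) + Real.sqrt ((N:ℝ)*K/α)) / Real.sqrt N :=
          (div_le_div_iff_of_pos_right hsqrtN).mpr hd1
      _ = L₂ / (α * N) + Real.sqrt (K/α) := by
          rw [add_div, h2, h3]
end
end

section
/- In the splittable congestion game, assume each resource cost c_t : ℝ → ℝ is convex and nondecreasing and each utility u_n : ℝ^T → ℝ is concave. Then Φ is monotone on X: for all x, y ∈ X, g ∈ Φ(x) and h ∈ Φ(y), ∑_{n=1}^N ⟨g_n − h_n, x_n − y_n⟩ ≥ 0. -/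
open scoped RealInnerProductSpace

noncomputable section

/-- The vector of resource costs `(c_t(v_t))_t`. -/
def cVec {T : ℕ} (c : Fin T → ℝ → ℝ) (v : Vec T) : Vec T :=
  WithLp.toLp 2 (fun t => c t (v t))


lemma subdiff_mono {E : Type*} [NormedAddCommGroup E] [InnerProductSpace ℝ E]
    {φ : E → ℝ} {a b q p : E} (hq : q ∈ subdiff φ a) (hp : p ∈ subdiff φ b) :
    0 ≤ ⟪q - p, a - b⟫ := by
  have h1 := hq b
  have h2 := hp a
  have e1 : ⟪p, a - b⟫ = -⟪p, b - a⟫ := by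
    rw [← inner_neg_right]; congr 1; abel
  have e2 : ⟪q, a - b⟫ = -⟪q, b - a⟫ := by
    rw [← inner_neg_right]; congr 1; abel
  rw [inner_sub_left, e2]
  rw [e1] at h2
  linarith

/-- in a splittable congestion game with convex nondecreasing resource
costs and concave utilities, `Φ` is monotone on `X`. -/
theorem congestion_phi_monotone (N T : ℕ) (hN : 0 < N) (hT : 0 < T)
    (Xset : Fin N → Set (Vec T))
    (hXne : ∀ n, (Xset n).Nonempty) (hXconv : ∀ n, Convex ℝ (Xset n))
    (hXcomp : ∀ n, IsCompact (Xset n))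
    (c : Fin T → ℝ → ℝ)
    (hcconv : ∀ t, ConvexOn ℝ Set.univ (c t)) (hcmono : ∀ t, Monotone (c t))
    (un : Fin N → Vec T → ℝ) (hconc : ∀ n, ConcaveOn ℝ Set.univ (un n))
    (x y : Profile N T) (hx : ∀ n, x n ∈ Xset n) (hy : ∀ n, y n ∈ Xset n)
    (g h : Profile N T)
    (hg : ∀ n, ∃ q ∈ subdiff (fun u => -un n u) (x n), g n = cVec c (avg x) + q)
    (hh : ∀ n, ∃ q ∈ subdiff (fun u => -un n u) (y n), h n = cVec c (avg y) + q) :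
    0 ≤ ∑ n, ⟪g n - h n, x n - y n⟫ := by
  choose q hq hge using hg
  choose p hp hhe using hh
  have hsplit : ∀ n, ⟪g n - h n, x n - y n⟫ =
      ⟪cVec c (avg x) - cVec c (avg y), x n - y n⟫ + ⟪q n - p n, x n - y n⟫ := by
    intro n
    rw [hge n, hhe n, ← inner_add_left]
    congr 1
    abel
  simp only [hsplit]
  rw [Finset.sum_add_distrib]
  have h2 : 0 ≤ ∑ n, ⟪q n - p n, x n - y n⟫ :=
    Finset.sum_nonneg fun n _ => subdiff_mono (hq n) (hp n)
  have h1 : 0 ≤ ∑ n, ⟪cVec c (avg x) - cVec c (avg y), x n - y n⟫ := by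
    rw [← inner_sum]
    have hsum : (∑ n, (x n - y n)) = (N : ℝ) • (avg x - avg y) := by
      rw [smul_sub]
      simp only [avg, smul_smul]
      rw [Finset.sum_sub_distrib]
      have : (N : ℝ) * (1 / N) = 1 := by
        field_simp
      rw [this, one_smul, one_smul]
    rw [hsum, real_inner_smul_right]
    have : 0 ≤ ⟪cVec c (avg x) - cVec c (avg y), avg x - avg y⟫ := by
      rw [PiLp.inner_apply]
      refine Finset.sum_nonneg fun t _ => ?_
      simp only [PiLp.sub_apply, RCLike.inner_apply, conj_trivial, cVec]
      rcases le_total (avg x t) (avg y t) with hab | hab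
      · have := hcmono t hab; nlinarith
      · have := hcmono t hab; nlinarith
    positivity
  linarith
end
end
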